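/- arXiv:1809.06426 — 16 statements merged into one kernel-verified Lean document; each statement's English description precedes it below -/
import Mathlib

section
/- Let X be a compact metric countable space and f : X → X a homeomorphism. Then every function in the Ellis semigroup E(X,f,ℕ) is injective if, and only if, every point of X is periodic. -/
open Filter Topology Set Function

/-- In a countable complete metric space, every nonempty closed set has an isolated point. -/
lemma aux_exists_isolated {X : Type*} [MetricSpace X] [CompactSpace X] [Countable X]
    {C : Set X} (hC : IsClosed C) (hne : C.Nonempty) :
    ∃ p ∈ C, ∃ U ∈ 𝓝 p, ∀ y ∈ U ∩ C, y = p := by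
  classical
  by_contra h
  push_neg at h
  have hpre : Preperfect C := by
    intro x hx
    rw [accPt_iff_nhds]
    intro U hU
    exact h x hx U hU
  have hperf : Perfect C := ⟨hC, hpre⟩
  obtain ⟨F, hFC, hFcont, hFinj⟩ := hperf.exists_nat_bool_injection hne
  haveI : Countable (ℕ → Bool) := hFinj.countable
  have hj : Function.Injective (fun s : Set ℕ => fun n => decide (n ∈ s)) := by
    intro s t hst
    ext n
    have := congrFun hst n
    simpa using this
  haveI : Countable (Set ℕ) := hj.countable
  obtain ⟨e, he⟩ := Countable.exists_injective_nat (Set ℕ)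
  exact Function.cantor_injective e he

/-- Let `X` be a compact metric countable space and `f : X → X` a homeomorphism.
Every function in the Ellis semigroup `E(X,f,ℕ)` (the closure of `{fⁿ : n ∈ ℕ}` in `X^X`
with the product topology) is injective iff every point of `X` is periodic. -/
theorem ellis_N_injective_iff_every_point_periodic
    {X : Type*} [MetricSpace X] [CompactSpace X] [Countable X] [Nonempty X]
    (f : X ≃ₜ X) :
    (∀ g ∈ closure {g : X → X | ∃ n : ℕ, g = (⇑f)^[n]}, Function.Injective g) ↔
      (∀ x : X, ∃ n : ℕ, 1 ≤ n ∧ (⇑f)^[n] x = x) := by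
  classical
  set S : Set (X → X) := {g : X → X | ∃ n : ℕ, g = (⇑f)^[n]} with hSdef
  constructor
  · -- injectivity of all elements implies all points periodic
    intro hinj x
    by_contra hx
    push_neg at hx
    -- hx : ∀ n, 1 ≤ n → f^[n] x ≠ x
    set O : Set X := {y : X | ∃ n : ℕ, y = (⇑f)^[n] x} with hOdef
    set Y : Set X := closure O with hYdef
    have hYc : IsClosed Y := isClosed_closure
    have hYne : Y.Nonempty := ⟨x, subset_closure ⟨0, rfl⟩⟩
    have hYinv : MapsTo (⇑f) Y Y := by
      rw [Set.mapsTo_iff_image_subset]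
      calc (⇑f) '' Y ⊆ closure ((⇑f) '' O) :=
            image_closure_subset_closure_image f.continuous
        _ ⊆ Y := by
            apply closure_mono
            rintro y ⟨z, ⟨n, rfl⟩, rfl⟩
            exact ⟨n + 1, (Function.iterate_succ_apply' (⇑f) n x).symm⟩
    -- Zorn: a minimal nonempty closed invariant subset of Y
    set Fam : Set (Set X) :=
      {M : Set X | M ⊆ Y ∧ M.Nonempty ∧ IsClosed M ∧ MapsTo (⇑f) M M} with hFam
    have hzorn : ∀ c ⊆ Fam, IsChain (· ⊆ ·) c → c.Nonempty →
        ∃ lb ∈ Fam, ∀ s ∈ c, lb ⊆ s := by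
      intro c hcF hchain hcne
      refine ⟨⋂₀ c, ⟨?_, ?_, ?_, ?_⟩, fun s hs => sInter_subset_of_mem hs⟩
      · obtain ⟨s, hs⟩ := hcne
        exact (sInter_subset_of_mem hs).trans (hcF hs).1
      · haveI := hcne.coe_sort
        rw [sInter_eq_iInter]
        apply IsCompact.nonempty_iInter_of_directed_nonempty_isCompact_isClosed
        · intro s t
          rcases hchain.total s.2 t.2 with h | h
          · exact ⟨s, subset_rfl, h⟩
          · exact ⟨t, h, subset_rfl⟩
        · exact fun s => (hcF s.2).2.1
        · exact fun s => (hcF s.2).2.2.1.isCompact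
        · exact fun s => (hcF s.2).2.2.1
      · exact isClosed_sInter fun s hs => (hcF hs).2.2.1
      · intro y hy
        rw [mem_sInter] at hy ⊢
        exact fun s hs => (hcF hs).2.2.2 (hy s hs)
    obtain ⟨M, -, hMmin⟩ := zorn_superset_nonempty Fam hzorn Y ⟨subset_rfl, hYne, hYc, hYinv⟩
    obtain ⟨hMY, hMne, hMcl, hMinv⟩ := hMmin.prop
    -- isolated point of M
    obtain ⟨p, hpM, U, hU, hUiso⟩ := aux_exists_isolated hMcl hMne
    have horb : ∀ n : ℕ, (⇑f)^[n] p ∈ M := by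
      intro n
      induction n with
      | zero => exact hpM
      | succ n ih =>
        rw [Function.iterate_succ_apply']
        exact hMinv ih
    -- the closure of the strictly forward orbit of p is all of M
    set O1 : Set X := closure {y : X | ∃ n : ℕ, 1 ≤ n ∧ y = (⇑f)^[n] p} with hO1def
    have hO1M : O1 ⊆ M := by
      apply closure_minimal _ hMcl
      rintro y ⟨n, -, rfl⟩
      exact horb n
    have hO1Fam : O1 ∈ Fam := by
      refine ⟨hO1M.trans hMY, ⟨f p, subset_closure ⟨1, le_rfl, rfl⟩⟩, isClosed_closure, ?_⟩
      rw [Set.mapsTo_iff_image_subset]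
      calc (⇑f) '' O1 ⊆ closure ((⇑f) '' {y : X | ∃ n : ℕ, 1 ≤ n ∧ y = (⇑f)^[n] p}) :=
            image_closure_subset_closure_image f.continuous
        _ ⊆ O1 := by
            apply closure_mono
            rintro y ⟨z, ⟨n, hn, rfl⟩, rfl⟩
            exact ⟨n + 1, le_trans hn (Nat.le_succ n),
              (Function.iterate_succ_apply' (⇑f) n p).symm⟩
    have hMO1 : M ⊆ O1 := hMmin.2 hO1Fam hO1M
    -- p is in the closure of its strictly forward orbit, and isolated: so p is periodic
    have hpO1 : p ∈ O1 := hMO1 hpM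
    rw [hO1def, mem_closure_iff_nhds] at hpO1
    obtain ⟨y, hyU, n, hn1, rfl⟩ := hpO1 U hU
    have hq : (⇑f)^[n] p = p := hUiso _ ⟨hyU, horb n⟩
    -- find g in the Ellis semigroup with g x = p
    have hScompact : IsCompact (closure S) := isClosed_closure.isCompact
    have himg : IsClosed ((fun φ : X → X => φ x) '' closure S) :=
      (hScompact.image (continuous_apply x)).isClosed
    have hpimg : p ∈ (fun φ : X → X => φ x) '' closure S := by
      have hsub : O ⊆ (fun φ : X → X => φ x) '' closure S := by
        rintro y ⟨m, rfl⟩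
        exact ⟨(⇑f)^[m], subset_closure ⟨m, rfl⟩, rfl⟩
      exact closure_minimal hsub himg (hMY hpM)
    obtain ⟨g, hgE, hgx⟩ := hpimg
    -- every element of the closure commutes with f
    have hcomm : ∀ z : X, g (f z) = f (g z) := by
      intro z
      have hcl : closure S ⊆ {φ : X → X | φ (f z) = f (φ z)} := by
        apply closure_minimal _ (isClosed_eq (continuous_apply (f z))
          (f.continuous.comp (continuous_apply z)))
        rintro φ ⟨m, rfl⟩
        exact (Function.iterate_succ_apply (⇑f) m z).symm.trans
          (Function.iterate_succ_apply' (⇑f) m z)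
      exact hcl hgE
    have hcommit : ∀ (m : ℕ) (z : X), g ((⇑f)^[m] z) = (⇑f)^[m] (g z) := by
      intro m
      induction m with
      | zero => intro z; rfl
      | succ m ih =>
        intro z
        rw [Function.iterate_succ_apply, Function.iterate_succ_apply, ih (f z), hcomm z]
    -- g x = p and g (f^[n] x) = f^[n] p = p, so injectivity forces f^[n] x = x
    have hkey : g ((⇑f)^[n] x) = g x := by
      have hgx' : g x = p := hgx
      rw [hcommit n x, hgx', hq]
    exact hx n hn1 (hinj g hgE hkey)
  · -- all points periodic implies every element injective
    intro hper g hg a b hab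
    obtain ⟨pa, hpa1, hpa⟩ := hper a
    obtain ⟨pb, hpb1, hpb⟩ := hper b
    have horbit : ∀ (c : X) (pc : ℕ), 1 ≤ pc → (⇑f)^[pc] c = c →
        ∀ n : ℕ, (⇑f)^[n] c = (⇑f)^[n % pc] c := by
      intro c pc hpc1 hfix n
      have hmul : ∀ k : ℕ, (⇑f)^[pc * k] c = c := by
        intro k
        rw [Function.iterate_mul]
        exact Function.IsFixedPt.iterate hfix k
      conv_lhs => rw [← Nat.mod_add_div n pc]
      rw [Function.iterate_add_apply, hmul]
    set Ca : Set X := (Set.range fun i : Fin pa => (⇑f)^[(i : ℕ)] a) \ {g a} with hCa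
    set Cb : Set X := (Set.range fun i : Fin pb => (⇑f)^[(i : ℕ)] b) \ {g b} with hCb
    have hCaf : Ca.Finite := (Set.finite_range _).subset diff_subset
    have hCbf : Cb.Finite := (Set.finite_range _).subset diff_subset
    set W : Set (X → X) := (fun φ : X → X => φ a) ⁻¹' Caᶜ ∩ (fun φ : X → X => φ b) ⁻¹' Cbᶜ
      with hW
    have hWopen : IsOpen W := by
      apply IsOpen.inter
      · exact hCaf.isClosed.isOpen_compl.preimage (continuous_apply a)
      · exact hCbf.isClosed.isOpen_compl.preimage (continuous_apply b)
    have hgW : g ∈ W := by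
      constructor
      · intro hmem
        exact hmem.2 rfl
      · intro hmem
        exact hmem.2 rfl
    obtain ⟨φ, hφW, m, rfl⟩ := (mem_closure_iff.mp hg W hWopen hgW)
    have hma : (⇑f)^[m] a = g a := by
      by_contra hne
      exact hφW.1 ⟨⟨⟨m % pa, Nat.mod_lt _ hpa1⟩, (horbit a pa hpa1 hpa m).symm⟩, hne⟩
    have hmb : (⇑f)^[m] b = g b := by
      by_contra hne
      exact hφW.2 ⟨⟨⟨m % pb, Nat.mod_lt _ hpb1⟩, (horbit b pb hpb1 hpb m).symm⟩, hne⟩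
    exact f.injective.iterate m (hma.trans (hab.trans hmb.symm))
end

section
/- Let X be a compact metric countable space and f : X → X a continuous map. If A ⊆ X is a minimal set, then A is the orbit of a periodic point; that is, there exist x ∈ X and k ≥ 1 with f^k(x) = x and A = {x, f(x), …, f^{k-1}(x)}. -/
open Filter Topology

/-- Let `X` be a compact metric countable space and `f : X → X` a continuous map.
If `A ⊆ X` is a minimal set, then `A` is the orbit of a periodic point. -/
theorem minimal_set_is_periodic_orbit
    {X : Type*} [MetricSpace X] [CompactSpace X] [Countable X] [Nonempty X]
    (f : X → X) (hf : Continuous f) (A : Set X)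
    (hne : A.Nonempty) (hcl : IsClosed A) (hinv : Set.MapsTo f A A)
    (hmin : ∀ B ⊆ A, B.Nonempty → IsClosed B → Set.MapsTo f B B → B = A) :
    ∃ (x : X) (k : ℕ), 1 ≤ k ∧ f^[k] x = x ∧ A = (fun i => f^[i] x) '' Set.Iio k := by
  -- orbits stay in A
  have horbA : ∀ a ∈ A, ∀ n, f^[n] a ∈ A := by
    intro a ha n
    induction n with
    | zero => simpa using ha
    | succ n ih => rw [Function.iterate_succ_apply']; exact hinv ih
  -- every point of A has dense orbit in A
  have horb : ∀ a ∈ A, closure (Set.range fun n => f^[n] a) = A := by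
    intro a ha
    have hsub : Set.range (fun n => f^[n] a) ⊆ A := by
      rintro _ ⟨n, rfl⟩; exact horbA a ha n
    have hfor : f '' Set.range (fun n => f^[n] a) ⊆ Set.range (fun n => f^[n] a) := by
      rintro _ ⟨_, ⟨n, rfl⟩, rfl⟩
      refine ⟨n + 1, ?_⟩
      simp [Function.iterate_succ_apply']
    refine hmin _ (hcl.closure_subset_iff.mpr hsub) ⟨a, subset_closure ⟨0, rfl⟩⟩
      isClosed_closure ?_
    intro y hy
    have h1 : f y ∈ f '' closure (Set.range fun n => f^[n] a) := ⟨y, hy, rfl⟩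
    have h2 := image_closure_subset_closure_image hf h1
    exact closure_mono hfor h2
  -- A is not perfect, so it has an isolated point
  have hnp : ¬ Perfect A := by
    intro hp
    obtain ⟨g, -, -, hgi⟩ := hp.exists_nat_bool_injection hne
    have h1 : Countable (ℕ → Bool) := hgi.countable
    have h2 : Countable (Set ℕ) := by
      classical
      exact Function.Injective.countable
        (f := fun s : Set ℕ => fun n => decide (n ∈ s))
        (fun s t hst => by
          ext n
          have := congrFun hst n
          simpa using this)
    obtain ⟨e, he⟩ := exists_injective_nat (Set ℕ)
    exact Function.cantor_injective e he
  have hx : ∃ x ∈ A, ¬ AccPt x (𝓟 A) := by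
    by_contra h
    push_neg at h
    exact hnp ⟨hcl, h⟩
  obtain ⟨x, hxA, hxacc⟩ := hx
  rw [accPt_iff_nhds] at hxacc
  push_neg at hxacc
  obtain ⟨U, hU, hUx⟩ := hxacc
  -- the orbit of f x is dense, hence hits U, and every point of U ∩ A is x
  have hdense := horb (f x) (hinv hxA)
  have hxcl : x ∈ closure (Set.range fun n => f^[n] (f x)) := hdense ▸ hxA
  rw [mem_closure_iff_nhds] at hxcl
  obtain ⟨y, hyU, n, hyn⟩ := hxcl U hU
  have hyn' : f^[n] (f x) = y := hyn
  have hyA : y ∈ A := hyn' ▸ horbA (f x) (hinv hxA) n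
  have hyx : y = x := hUx y ⟨hyU, hyA⟩
  have hper : f^[n + 1] x = x := by
    rw [Function.iterate_succ_apply, hyn', hyx]
  set k := n + 1 with hk
  refine ⟨x, k, Nat.le_add_left 1 n, hper, ?_⟩
  have hOsub : (fun i => f^[i] x) '' Set.Iio k ⊆ A := by
    rintro _ ⟨i, -, rfl⟩; exact horbA x hxA i
  have hOne : ((fun i => f^[i] x) '' Set.Iio k).Nonempty :=
    ⟨x, 0, Nat.succ_pos n, rfl⟩
  have hOfin : ((fun i => f^[i] x) '' Set.Iio k).Finite :=
    (Set.finite_Iio k).image _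
  have hOmap : Set.MapsTo f ((fun i => f^[i] x) '' Set.Iio k)
      ((fun i => f^[i] x) '' Set.Iio k) := by
    rintro _ ⟨i, hi, rfl⟩
    rcases lt_or_eq_of_le (Nat.succ_le_of_lt hi) with h | h
    · refine ⟨i + 1, h, ?_⟩
      simp [Function.iterate_succ_apply']
    · refine ⟨0, Nat.succ_pos n, ?_⟩
      simp only [Function.iterate_zero_apply]
      rw [← Function.iterate_succ_apply' f i x, h, hper]
  exact (hmin _ hOsub hOne hOfin.isClosed hOmap).symm
end

section
/- Let X be a compact metric countable space and f : X → X a homeomorphism. Then every function in E(X,f,ℕ) is injective if, and only if, every function in E(X,f,ℤ) is injective. -/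
open Filter Topology

section Aux

variable {X : Type*} [MetricSpace X] [CompactSpace X]

private lemma comp_right_cont (q : X → X) : Continuous fun p : X → X => p ∘ q :=
  continuous_pi fun x => continuous_apply (q x)

private lemma comp_left_cont {p : X → X} (hp : Continuous p) :
    Continuous fun q : X → X => p ∘ q :=
  continuous_pi fun x => hp.comp (continuous_apply x)

/-- The closure of a set of continuous maps closed under composition is closed
under composition. -/
private lemma closure_comp_mem {A : Set (X → X)} (hA : ∀ p ∈ A, Continuous p)
    (hmul : ∀ p ∈ A, ∀ q ∈ A, p ∘ q ∈ A)
    {p q : X → X} (hp : p ∈ closure A) (hq : q ∈ closure A) : p ∘ q ∈ closure A := by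
  have step1 : ∀ r ∈ A, r ∘ q ∈ closure A := by
    intro r hr
    have : (fun q' : X → X => r ∘ q') q ∈ closure A :=
      map_mem_closure (comp_left_cont (hA r hr)) hq (fun a ha => hmul r hr a ha)
    simpa using this
  have h2 : Set.MapsTo (fun p' : X → X => p' ∘ q) A (closure A) := fun a ha => step1 a ha
  have := h2.closure_left (comp_right_cont q) isClosed_closure hp
  simpa using this

/-- If every element of the Ellis semigroup `E(X,f,ℕ)` is injective, then the identity
belongs to the closure of `{f^[m+c] : m ∈ ℕ}` for every `c`. -/
private lemma id_mem_closure (f : X ≃ₜ X)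
    (hN : ∀ g ∈ closure {g : X → X | ∃ n : ℕ, g = (⇑f)^[n]}, Function.Injective g)
    (c : ℕ) : id ∈ closure {g : X → X | ∃ m : ℕ, g = (⇑f)^[m + c]} := by
  set A : Set (X → X) := {g : X → X | ∃ m : ℕ, g = (⇑f)^[m + c]} with hAdef
  have hAcont : ∀ p ∈ A, Continuous p := by
    rintro p ⟨m, rfl⟩; exact f.continuous.iterate _
  have hAmul : ∀ p ∈ A, ∀ q ∈ A, p ∘ q ∈ A := by
    rintro p ⟨m, rfl⟩ q ⟨k, rfl⟩
    refine ⟨m + k + c, ?_⟩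
    have h : m + c + (k + c) = m + k + c + c := by omega
    rw [← Function.iterate_add, h]
  -- the closure of `A` is a compact subsemigroup of `(X → X, ∘)`
  letI : Semigroup (X → X) :=
    { mul := fun p q => p ∘ q
      mul_assoc := fun _ _ _ => rfl }
  have hml : ∀ r : X → X, Continuous (· * r) := fun r => comp_right_cont r
  obtain ⟨u, hu, huu⟩ :=
    exists_idempotent_in_compact_subsemigroup hml (closure A)
      (Set.Nonempty.closure ⟨(⇑f)^[c], ⟨0, by simp⟩⟩)
      (isClosed_closure.isCompact) (fun p hp q hq => closure_comp_mem hAcont hAmul hp hq)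
  -- `u` is injective, being in `E(X,f,ℕ)`
  have hsub : closure A ⊆ closure {g : X → X | ∃ n : ℕ, g = (⇑f)^[n]} :=
    closure_mono (by rintro p ⟨m, rfl⟩; exact ⟨m + c, rfl⟩)
  have hinj : Function.Injective u := hN u (hsub hu)
  -- an injective idempotent is the identity
  have : u = id := by
    funext x
    have : u (u x) = u x := congrFun huu x
    exact hinj this
  rwa [this] at hu

/-- All negative powers of `f` belong to `E(X,f,ℕ)`. -/
private lemma symm_iterate_mem_closure (f : X ≃ₜ X)
    (hN : ∀ g ∈ closure {g : X → X | ∃ n : ℕ, g = (⇑f)^[n]}, Function.Injective g)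
    (c : ℕ) : (⇑f.symm)^[c] ∈ closure {g : X → X | ∃ n : ℕ, g = (⇑f)^[n]} := by
  have hid := id_mem_closure f hN c
  have hcont : Continuous fun q : X → X => (⇑f.symm)^[c] ∘ q :=
    comp_left_cont (f.symm.continuous.iterate c)
  have hmaps : Set.MapsTo (fun q : X → X => (⇑f.symm)^[c] ∘ q)
      {g : X → X | ∃ m : ℕ, g = (⇑f)^[m + c]} {g : X → X | ∃ n : ℕ, g = (⇑f)^[n]} := by
    rintro p ⟨m, rfl⟩
    refine ⟨m, ?_⟩
    funext x
    have h1 : (⇑f)^[m + c] x = (⇑f)^[c] ((⇑f)^[m] x) := by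
      rw [add_comm, Function.iterate_add_apply]
    have h2 : Function.LeftInverse ((⇑f.symm)^[c]) ((⇑f)^[c]) :=
      Function.LeftInverse.iterate (fun y => f.symm_apply_apply y) c
    simp [h1, h2 ((⇑f)^[m] x)]
  have := map_mem_closure hcont hid hmaps
  simpa using this

end Aux

/-- Let `X` be a compact metric countable space and `f : X → X` a homeomorphism.
Every function in `E(X,f,ℕ)` is injective iff every function in `E(X,f,ℤ)` is injective. -/
theorem ellis_N_injective_iff_ellis_Z_injective
    {X : Type*} [MetricSpace X] [CompactSpace X] [Countable X] [Nonempty X]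
    (f : X ≃ₜ X) :
    (∀ g ∈ closure {g : X → X | ∃ n : ℕ, g = (⇑f)^[n]}, Function.Injective g) ↔
      (∀ g ∈ closure {g : X → X | ∃ n : ℤ, g = ⇑(f.toEquiv ^ n)}, Function.Injective g) := by
  constructor
  · intro hN
    have key : {g : X → X | ∃ n : ℤ, g = ⇑(f.toEquiv ^ n)} ⊆
        closure {g : X → X | ∃ n : ℕ, g = (⇑f)^[n]} := by
      rintro g ⟨n, rfl⟩
      induction n using Int.rec with
      | ofNat m =>
          refine subset_closure ⟨m, ?_⟩
          simp [Equiv.Perm.coe_pow]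
      | negSucc m =>
          have h1 : f.toEquiv ^ (Int.negSucc m) = (f.toEquiv⁻¹) ^ (m + 1) := by
            rw [zpow_negSucc, inv_pow]
          have h2 : ⇑(f.toEquiv ^ (Int.negSucc m)) = (⇑f.symm)^[m + 1] := by
            rw [h1, Equiv.Perm.coe_pow]
            rfl
          rw [h2]
          exact symm_iterate_mem_closure f hN (m + 1)
    intro g hg
    exact hN g (by
      have := closure_mono key hg
      rwa [closure_closure] at this)
  · intro hZ g hg
    refine hZ g (closure_mono ?_ hg)
    rintro p ⟨n, rfl⟩
    exact ⟨(n : ℤ), by simp [Equiv.Perm.coe_pow]⟩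
end

section
/- Let X be a compact metric space and f : X → X a homeomorphism. Then E(X,f,ℕ) = E(X,f,ℤ) if, and only if, there exists an ultrafilter p on ℕ with p different from the principal ultrafilter at 0 such that the p-iterate f^p equals the identity map of X. -/
open Filter Topology

section Aux

set_option linter.unusedSectionVars false

variable {X : Type*} [MetricSpace X] [CompactSpace X] [Nonempty X] (f : X ≃ₜ X)

private def ellisS (f : X ≃ₜ X) : Set (X → X) := {g : X → X | ∃ n : ℕ, g = (⇑f)^[n]}

/-- If some ultrafilter limit of the iterates is `g`, then `g` is in the closure. -/
private lemma mem_closure_of_ulim (q : Ultrafilter ℕ) (g : X → X)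
    (h : ∀ x : X, Tendsto (fun n : ℕ => (⇑f)^[n] x) ↑q (𝓝 (g x))) :
    g ∈ closure (ellisS f) := by
  have ht : Tendsto (fun n : ℕ => (⇑f)^[n]) ↑q (𝓝 g) := by
    rw [tendsto_pi_nhds]; exact h
  exact mem_closure_of_tendsto ht (Eventually.of_forall fun n => ⟨n, rfl⟩)

/-- Conversely, each element of the closure is an ultrafilter limit of iterates. -/
private lemma ulim_of_mem_closure (g : X → X) (hg : g ∈ closure (ellisS f)) :
    ∃ q : Ultrafilter ℕ, ∀ x : X, Tendsto (fun n : ℕ => (⇑f)^[n] x) ↑q (𝓝 (g x)) := by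
  rw [mem_closure_iff_ultrafilter] at hg
  obtain ⟨u, huS, hu⟩ := hg
  set h : ℕ → (X → X) := fun n => (⇑f)^[n] with hh
  have hrange : Set.range h ∈ u := by
    refine mem_of_superset huS ?_
    rintro g ⟨n, rfl⟩; exact ⟨n, rfl⟩
  have hne : (Filter.comap h ↑u).NeBot := by
    refine comap_neBot fun t ht => ?_
    have : t ∩ Set.range h ∈ u := inter_mem ht hrange
    obtain ⟨y, hy1, n, rfl⟩ := u.nonempty_of_mem this
    exact ⟨n, hy1⟩
  refine ⟨Ultrafilter.of (Filter.comap h ↑u), fun x => ?_⟩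
  have h1 : Tendsto h ↑(Ultrafilter.of (Filter.comap h ↑u)) (𝓝 g) := by
    calc Filter.map h ↑(Ultrafilter.of (Filter.comap h ↑u))
        ≤ Filter.map h (Filter.comap h ↑u) := map_mono (Ultrafilter.of_le _)
      _ ≤ ↑u := map_comap_le
      _ ≤ 𝓝 g := hu
  exact (tendsto_pi_nhds.1 h1) x

/-- `f.symm ∘ ·` maps the closure of the Ellis semigroup into itself, provided
`f.symm` itself belongs to the closure. -/
private lemma symm_comp_mem (hsymm : ⇑f.symm ∈ closure (ellisS f)) (g : X → X)
    (hg : g ∈ closure (ellisS f)) : ⇑f.symm ∘ g ∈ closure (ellisS f) := by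
  have hcont : Continuous fun h : X → X => ⇑f.symm ∘ h := by
    apply continuous_pi
    intro x
    exact f.symm.continuous.comp (continuous_apply x)
  have himg : (fun h : X → X => ⇑f.symm ∘ h) '' (ellisS f) ⊆ closure (ellisS f) := by
    rintro _ ⟨h, ⟨n, rfl⟩, rfl⟩
    cases n with
    | zero => simpa using hsymm
    | succ m =>
      apply subset_closure
      refine ⟨m, ?_⟩
      ext x
      simp [Function.iterate_succ_apply', Function.comp]
  have key : (fun h : X → X => ⇑f.symm ∘ h) '' closure (ellisS f) ⊆ closure (ellisS f) := by
    calc (fun h : X → X => ⇑f.symm ∘ h) '' closure (ellisS f)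
        ⊆ closure ((fun h : X → X => ⇑f.symm ∘ h) '' ellisS f) := image_closure_subset_closure_image hcont
      _ ⊆ closure (closure (ellisS f)) := closure_mono himg
      _ = closure (ellisS f) := closure_closure
  exact key ⟨g, hg, rfl⟩

end Aux

/-- Let `X` be a compact metric space and `f : X → X` a homeomorphism. Then
`E(X,f,ℕ) = E(X,f,ℤ)` iff there is an ultrafilter `p` on `ℕ`, different from the
principal ultrafilter at `0`, such that the `p`-iterate `f^p` is the identity of `X`
(i.e. `p-lim_n fⁿ(x) = x` for every `x`). -/
theorem ellis_N_eq_ellis_Z_iff_exists_p_identity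
    {X : Type*} [MetricSpace X] [CompactSpace X] [Nonempty X]
    (f : X ≃ₜ X) :
    closure {g : X → X | ∃ n : ℕ, g = (⇑f)^[n]} =
        closure {g : X → X | ∃ n : ℤ, g = ⇑(f.toEquiv ^ n)} ↔
      ∃ p : Ultrafilter ℕ, p ≠ pure 0 ∧
        ∀ x : X, Tendsto (fun n : ℕ => (⇑f)^[n] x) ↑p (𝓝 x) := by
  constructor
  · -- forward direction
    intro heq
    have hsymmT : (⇑f.symm : X → X) ∈ {g : X → X | ∃ n : ℤ, g = ⇑(f.toEquiv ^ n)} := by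
      refine ⟨-1, ?_⟩
      simp [zpow_neg, Equiv.Perm.inv_def]
    have hsymm : (⇑f.symm : X → X) ∈ closure (ellisS f) := by
      rw [ellisS, heq]
      exact subset_closure hsymmT
    obtain ⟨q, hq⟩ := ulim_of_mem_closure f _ hsymm
    refine ⟨q.map (· + 1), ?_, ?_⟩
    · intro h
      have h0 : {0} ∈ q.map (· + 1) := by rw [h]; exact Ultrafilter.mem_pure.2 rfl
      have : {n : ℕ | n + 1 ∈ ({0} : Set ℕ)} ∈ q := h0
      have : (∅ : Set ℕ) ∈ q := by
        convert this using 1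
        ext n; simp
      exact (Filter.empty_notMem _ ) this
    · intro x
      have : Tendsto (fun n : ℕ => (⇑f)^[n + 1] x) ↑q (𝓝 x) := by
        have h1 : Tendsto (fun n : ℕ => f ((⇑f)^[n] x)) ↑q (𝓝 (f (f.symm x))) :=
          (f.continuous.tendsto _).comp (hq x)
        simp only [Homeomorph.apply_symm_apply] at h1
        refine h1.congr fun n => ?_
        rw [Function.iterate_succ_apply']
      exact this
  · -- backward direction
    rintro ⟨p, hp0, hp⟩
    -- {n | 1 ≤ n} ∈ p
    have hone : {n : ℕ | 1 ≤ n} ∈ p := by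
      by_contra h
      have : ({n : ℕ | 1 ≤ n}ᶜ : Set ℕ) ∈ p := (Ultrafilter.compl_mem_iff_notMem).2 h
      have hsing : ({0} : Set ℕ) ∈ p := by
        convert this using 1
        ext n; simp [Nat.lt_one_iff]
      obtain ⟨x, hx, hpx⟩ := Ultrafilter.eq_pure_of_finite_mem (Set.finite_singleton 0) hsing
      rw [Set.mem_singleton_iff] at hx
      exact hp0 (by rw [hpx, hx])
    -- f.symm ∈ closure of ℕ-iterates
    have hsymm : (⇑f.symm : X → X) ∈ closure (ellisS f) := by
      refine mem_closure_of_ulim f (p.map (· - 1)) _ fun x => ?_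
      have h1 : Tendsto (fun n : ℕ => f.symm ((⇑f)^[n] x)) ↑p (𝓝 (f.symm x)) :=
        (f.symm.continuous.tendsto _).comp (hp x)
      have h2 : Tendsto (fun n : ℕ => (⇑f)^[n - 1] x) ↑p (𝓝 (f.symm x)) := by
        refine h1.congr' ?_
        filter_upwards [hone] with n hn
        obtain ⟨m, rfl⟩ := Nat.exists_eq_add_of_le hn
        simp only [Nat.add_sub_cancel_left,
          show 1 + m = m + 1 from Nat.add_comm 1 m, Function.iterate_succ_apply',
          Homeomorph.symm_apply_apply, Nat.add_sub_cancel]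
      exact h2
    -- all negative iterates are in the closure
    have hneg : ∀ m : ℕ, (⇑f.symm)^[m] ∈ closure (ellisS f) := by
      intro m
      induction m with
      | zero => exact subset_closure ⟨0, rfl⟩
      | succ k ih =>
        have := symm_comp_mem f hsymm _ ih
        rwa [show (⇑f.symm ∘ (⇑f.symm)^[k]) = (⇑f.symm)^[k + 1] from
          (Function.iterate_succ' _ _).symm] at this
    -- conclude set equality
    apply le_antisymm
    · apply closure_mono
      rintro g ⟨n, rfl⟩
      exact ⟨(n : ℤ), by simp [Equiv.Perm.coe_pow]⟩
    · refine closure_minimal ?_ isClosed_closure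
      rintro g ⟨n, rfl⟩
      cases n with
      | ofNat m => exact subset_closure ⟨m, by simp [Equiv.Perm.coe_pow]⟩
      | negSucc m =>
        have hcoe : ⇑(f.toEquiv ^ (Int.negSucc m)) = (⇑f.symm)^[m + 1] := by
          rw [zpow_negSucc, ← inv_pow, Equiv.Perm.coe_pow]
          rfl
        rw [hcoe]
        exact hneg (m + 1)
end

section
/- Let X be a compact metric space and f : X → X a distal homeomorphism. Then E(X,f,ℕ) = E(X,f,ℤ). -/
open Filter Topology

/-- Auxiliary: right composition is continuous in the product topology. -/
lemma comp_right_continuous' {X : Type*} [TopologicalSpace X] (h : X → X) :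
    Continuous (fun g : X → X => g ∘ h) :=
  continuous_pi fun x => continuous_apply (h x)

/-- Auxiliary: left composition by a continuous map is continuous. -/
lemma comp_left_continuous' {X : Type*} [TopologicalSpace X] {c : X → X}
    (hc : Continuous c) : Continuous (fun g : X → X => c ∘ g) :=
  continuous_pi fun x => hc.comp (continuous_apply x)

/-- Let `X` be a compact metric space and `f : X → X` a distal homeomorphism
(for distinct `x, y`, `inf{d(fⁿ(x), fⁿ(y)) : n ∈ ℤ} > 0`). Then `E(X,f,ℕ)= E(X,f,ℤ)`. -/
theorem distal_ellis_N_eq_ellis_Z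
    {X : Type*} [MetricSpace X] [CompactSpace X] [Nonempty X]
    (f : X ≃ₜ X)
    (hdistal : ∀ x y : X, x ≠ y →
      ∃ ε > (0:ℝ), ∀ n : ℤ, ε ≤ dist ((f.toEquiv ^ n) x) ((f.toEquiv ^ n) y)) :
    closure {g : X → X | ∃ n : ℕ, g = (⇑f)^[n]} =
      closure {g : X → X | ∃ n : ℤ, g = ⇑(f.toEquiv ^ n)} := by
  have coe_pow : ∀ n : ℕ, ⇑(f.toEquiv ^ (n : ℤ)) = (⇑f)^[n] := by
    intro n; rw [zpow_natCast, Equiv.Perm.coe_pow]; rfl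
  have coe_neg_pow : ∀ n : ℕ, ⇑(f.toEquiv ^ (-(n : ℤ))) = (⇑f.symm)^[n] := by
    intro n; rw [zpow_neg, zpow_natCast, ← inv_pow, Equiv.Perm.coe_pow]; rfl
  set S : Set (X → X) := {g : X → X | ∃ n : ℕ, g = (⇑f)^[n]} with hS
  set S' : Set (X → X) := {g : X → X | ∃ n : ℕ, g = (⇑f)^[n + 1]} with hS'
  -- S' is closed under composition (with iterates on the left staying in closure S')
  have hA : ∀ a : ℕ, ∀ h ∈ closure S', (⇑f)^[a] ∘ h ∈ closure S' := by
    intro a h hh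
    have : (fun g : X → X => (⇑f)^[a] ∘ g) '' S' ⊆ S' := by
      rintro _ ⟨g, ⟨b, rfl⟩, rfl⟩
      refine ⟨a + b, ?_⟩
      show (⇑f)^[a] ∘ (⇑f)^[b + 1] = (⇑f)^[a + b + 1]
      rw [← Function.iterate_add, Nat.add_assoc]
    have := (image_closure_subset_closure_image
      (comp_left_continuous' (f.continuous.iterate a))).trans (closure_mono this)
    exact this ⟨h, hh, rfl⟩
  have hComp : ∀ g ∈ closure S', ∀ h ∈ closure S', g ∘ h ∈ closure S' := by
    intro g hg h hh
    have : (fun g : X → X => g ∘ h) '' S' ⊆ closure S' := by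
      rintro _ ⟨g, ⟨b, rfl⟩, rfl⟩
      exact hA (b + 1) h hh
    have := (image_closure_subset_closure_image (comp_right_continuous' h)).trans
      ((closure_mono this).trans_eq closure_closure)
    exact this ⟨g, hg, rfl⟩
  -- Find an idempotent in closure S' using a local semigroup structure on X → X
  letI : Mul (X → X) := ⟨fun g h => g ∘ h⟩
  letI : Semigroup (X → X) := { mul_assoc := fun _ _ _ => rfl }
  obtain ⟨u, huS, huu⟩ : ∃ u ∈ closure S', u * u = u := by
    refine exists_idempotent_in_compact_subsemigroup
      (fun r => comp_right_continuous' r) (closure S') ?_ ?_ hComp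
    · exact ⟨⇑f, subset_closure ⟨0, rfl⟩⟩
    · exact isClosed_closure.isCompact
  -- Distality forces u = id
  have hu_id : u = id := by
    funext x
    by_contra hx
    obtain ⟨ε, hε, hεd⟩ := hdistal (u x) x hx
    have key : ε ≤ dist (u (u x)) (u x) := by
      have hcl : IsClosed {g : X → X | ε ≤ dist (g (u x)) (g x)} := by
        have : Continuous (fun g : X → X => dist (g (u x)) (g x)) :=
          Continuous.dist (continuous_apply (u x)) (continuous_apply x)
        exact isClosed_le continuous_const this
      have hsub : S' ⊆ {g : X → X | ε ≤ dist (g (u x)) (g x)} := by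
        rintro _ ⟨n, rfl⟩
        have := hεd ((n : ℤ) + 1)
        rwa [show ((n : ℤ) + 1) = ((n + 1 : ℕ) : ℤ) by push_cast; ring, coe_pow] at this
      exact (closure_minimal hsub hcl) huS
    have : u (u x) = u x := congrFun huu x
    rw [this, dist_self] at key
    linarith
  -- Hence id ∈ closure S', so f.symm ∈ closure S
  have hsymm : ⇑f.symm ∈ closure S := by
    have himg : (fun g : X → X => ⇑f.symm ∘ g) '' S' ⊆ S := by
      rintro _ ⟨g, ⟨b, rfl⟩, rfl⟩
      refine ⟨b, ?_⟩
      rw [Function.iterate_succ']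
      funext x
      simp
    have := (image_closure_subset_closure_image
      (comp_left_continuous' f.symm.continuous)).trans (closure_mono himg)
    have hid : (⇑f.symm : X → X) = ⇑f.symm ∘ u := by rw [hu_id]; rfl
    rw [hid]
    exact this ⟨u, huS, rfl⟩
  -- All negative iterates lie in closure S
  have hneg : ∀ m : ℕ, (⇑f.symm)^[m] ∈ closure S := by
    intro m
    induction m with
    | zero => exact subset_closure ⟨0, rfl⟩
    | succ m ih =>
      have himg : (fun g : X → X => ⇑f.symm ∘ g) '' S ⊆ closure S := by
        rintro _ ⟨g, ⟨b, rfl⟩, rfl⟩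
        cases b with
        | zero => simpa using hsymm
        | succ b =>
          refine subset_closure ⟨b, ?_⟩
          rw [Function.iterate_succ']
          funext x
          simp
      have := (image_closure_subset_closure_image
        (comp_left_continuous' f.symm.continuous)).trans
        ((closure_mono himg).trans_eq closure_closure)
      have : ⇑f.symm ∘ (⇑f.symm)^[m] ∈ closure S := this ⟨_, ih, rfl⟩
      rwa [Function.iterate_succ']
  -- Conclude by antisymmetry
  apply le_antisymm
  · apply closure_mono
    rintro _ ⟨n, rfl⟩
    exact ⟨(n : ℤ), (coe_pow n).symm⟩
  · apply closure_minimal _ isClosed_closure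
    rintro _ ⟨n, rfl⟩
    rcases le_or_gt (0:ℤ) n with hn | hn
    · obtain ⟨m, rfl⟩ := Int.eq_ofNat_of_zero_le hn
      rw [coe_pow]
      exact subset_closure ⟨m, rfl⟩
    · obtain ⟨m, rfl⟩ : ∃ m : ℕ, n = -(m : ℤ) :=
        ⟨n.natAbs, by omega⟩
      rw [coe_neg_pow]
      exact hneg m
end

section
/- Let X be a compact metric space and f : X → X a homeomorphism such that every point of X is periodic. Then there exists a nonprincipal ultrafilter p on ℕ such that the p-iterate f^p equals the identity map of X. -/
open Filter Topology

/-- Let `X` be a compact metric space and `f : X → X` a homeomorphism such that every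
point of `X` is periodic. Then there is a nonprincipal ultrafilter `p` on `ℕ` such that
the `p`-iterate `f^p` is the identity map of `X` (i.e. `p-lim_n fⁿ(x) = x` for all `x`). -/
theorem every_point_periodic_exists_p_identity
    {X : Type*} [MetricSpace X] [CompactSpace X] [Nonempty X]
    (f : X ≃ₜ X)
    (hper : ∀ x : X, ∃ n : ℕ, 1 ≤ n ∧ (⇑f)^[n] x = x) :
    ∃ p : Ultrafilter ℕ, (∀ n : ℕ, p ≠ pure n) ∧
      ∀ x : X, Tendsto (fun n : ℕ => (⇑f)^[n] x) ↑p (𝓝 x) := by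
  refine ⟨(hyperfilter ℕ).map Nat.factorial, ?_, ?_⟩
  · intro n hn
    have hmem : {n} ∈ (hyperfilter ℕ).map Nat.factorial := by
      rw [hn]; exact Ultrafilter.mem_pure.2 rfl
    have : Nat.factorial ⁻¹' {n} ∈ hyperfilter ℕ := hmem
    have hfin : (Nat.factorial ⁻¹' {n} : Set ℕ).Finite := by
      apply Set.Finite.subset (Set.finite_Iic n)
      intro m hm
      simp only [Set.mem_preimage, Set.mem_singleton_iff] at hm
      exact Set.mem_Iic.2 (hm ▸ Nat.self_le_factorial m)
    exact Filter.notMem_hyperfilter_of_finite hfin this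
  · intro x
    obtain ⟨d, hd1, hdx⟩ := hper x
    rw [Ultrafilter.coe_map, tendsto_map'_iff]
    have hev : ∀ᶠ n in (hyperfilter ℕ : Filter ℕ),
        ((fun n : ℕ => (⇑f)^[n] x) ∘ Nat.factorial) n = x := by
      apply Filter.mem_of_superset
        ((Set.finite_Iio d).compl_mem_hyperfilter)
      intro n hn
      simp only [Set.mem_compl_iff, Set.mem_Iio, not_lt] at hn
      obtain ⟨k, hk⟩ := Nat.dvd_factorial hd1 hn
      show (⇑f)^[n.factorial] x = x
      rw [hk, Function.iterate_mul]
      exact Function.iterate_fixed hdx k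
    exact (tendsto_const_nhds.congr' (by filter_upwards [hev] with n h using h.symm))
end

section
/- Let X be a compact metric countable space and f : X → X a homeomorphism. If the p-iterate f^p is a homeomorphism of X for some nonprincipal ultrafilter p on ℕ, then every point of X is periodic. -/
open Filter Topology

/-- Let `X` be a compact metric countable space and `f : X → X` a homeomorphism.
If the `p`-iterate `f^p` is a homeomorphism of `X` for some nonprincipal ultrafilter `p`
on `ℕ`, then every point of `X` is periodic. -/
theorem p_iterate_homeomorph_implies_periodic
    {X : Type*} [MetricSpace X] [CompactSpace X] [Countable X] [Nonempty X]
    (f : X ≃ₜ X) (p : Ultrafilter ℕ) (hp : ∀ n : ℕ, p ≠ pure n)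
    (g : X ≃ₜ X)
    (hg : ∀ x : X, Tendsto (fun n : ℕ => (⇑f)^[n] x) ↑p (𝓝 (g x))) :
    ∀ x : X, ∃ n : ℕ, 1 ≤ n ∧ (⇑f)^[n] x = x := by
  classical
  set P : Set X := {x | ∃ n : ℕ, 1 ≤ n ∧ (⇑f)^[n] x = x} with hP
  -- `g` commutes with `f`
  have hcomm1 : ∀ x : X, g (f x) = f (g x) := by
    intro x
    have h1 : Tendsto (fun n : ℕ => (⇑f)^[n] (f x)) ↑p (𝓝 (g (f x))) := hg (f x)
    have h2 : Tendsto (fun n : ℕ => f ((⇑f)^[n] x)) ↑p (𝓝 (f (g x))) :=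
      (f.continuous.tendsto _).comp (hg x)
    have heq : (fun n : ℕ => (⇑f)^[n] (f x)) = fun n : ℕ => f ((⇑f)^[n] x) := by
      funext n
      rw [← Function.iterate_succ_apply, Function.iterate_succ_apply']
    rw [heq] at h1
    exact tendsto_nhds_unique h1 h2
  have hcomm : ∀ (k : ℕ) (x : X), g ((⇑f)^[k] x) = (⇑f)^[k] (g x) := by
    intro k
    induction k with
    | zero => intro x; simp
    | succ k ih =>
      intro x
      rw [Function.iterate_succ_apply, ih (f x), hcomm1,
        ← Function.iterate_succ_apply]
  -- iterates of periodic points are periodic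
  have hiterP : ∀ x ∈ P, ∀ i : ℕ, (⇑f)^[i] x ∈ P := by
    intro x hx i
    obtain ⟨k, hk1, hk⟩ := hx
    refine ⟨k, hk1, ?_⟩
    rw [← Function.iterate_add_apply, Nat.add_comm, Function.iterate_add_apply, hk]
  -- orbits of periodic points are finite
  have horbfin : ∀ x ∈ P, (Set.range fun i : ℕ => (⇑f)^[i] x).Finite := by
    intro x hx
    obtain ⟨k, hk1, hk⟩ := hx
    have hsub : (Set.range fun i : ℕ => (⇑f)^[i] x) ⊆
        (fun i : ℕ => (⇑f)^[i] x) '' Set.Iio k := by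
      rintro _ ⟨n, rfl⟩
      refine ⟨n % k, Nat.mod_lt _ hk1, ?_⟩
      show (⇑f)^[n % k] x = (⇑f)^[n] x
      conv_rhs => rw [← Nat.mod_add_div n k]
      rw [Function.iterate_add_apply, Function.iterate_mul,
        Function.iterate_fixed hk]
    exact ((Set.finite_Iio k).image _).subset hsub
  -- g maps a periodic point into its own orbit
  have hgOrb : ∀ x ∈ P, g x ∈ Set.range fun i : ℕ => (⇑f)^[i] x := by
    intro x hx
    have hmem : (Set.range fun i : ℕ => (⇑f)^[i] x) ∈ p.map fun n : ℕ => (⇑f)^[n] x := by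
      apply Ultrafilter.mem_map.mpr
      have : ((fun n : ℕ => (⇑f)^[n] x) ⁻¹' Set.range fun i : ℕ => (⇑f)^[i] x) = Set.univ := by
        ext n; simp [Set.mem_preimage]
      rw [this]; exact Filter.univ_mem
    obtain ⟨v, hv, hpv⟩ := Ultrafilter.eq_pure_of_finite_mem (horbfin x hx) hmem
    have hvset : {n : ℕ | (⇑f)^[n] x = v} ∈ p := by
      have : {v} ∈ p.map fun n : ℕ => (⇑f)^[n] x := by
        rw [hpv]; exact rfl
      exact this
    have hEv : (fun n : ℕ => (⇑f)^[n] x) =ᶠ[↑p] fun _ => v := hvset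
    have htv : Tendsto (fun _ : ℕ => v) ↑p (𝓝 (g x)) := (hg x).congr' hEv
    have : v = g x := tendsto_nhds_unique tendsto_const_nhds htv
    exact this ▸ hv
  have hgP : g '' P ⊆ P := by
    rintro _ ⟨x, hx, rfl⟩
    obtain ⟨i, hi⟩ := hgOrb x hx
    exact hi ▸ hiterP x hx i
  have hPgP : P ⊆ g '' P := by
    intro x hx
    set S : Set X := Set.range fun i : ℕ => (⇑f)^[i] x with hS
    have hSP : S ⊆ P := by rintro _ ⟨i, rfl⟩; exact hiterP x hx i
    have hmaps : Set.MapsTo g S S := by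
      rintro _ ⟨i, rfl⟩
      obtain ⟨j, hj⟩ := hgOrb x hx
      refine ⟨i + j, ?_⟩
      show (⇑f)^[i + j] x = g ((⇑f)^[i] x)
      have hj' : (⇑f)^[j] x = g x := hj
      rw [Function.iterate_add_apply, hj', ← hcomm]
    have hbij : Set.BijOn g S S :=
      ((horbfin x hx).injOn_iff_bijOn_of_mapsTo hmaps).mp (g.injective.injOn)
    have hxS : x ∈ S := ⟨0, rfl⟩
    obtain ⟨y, hyS, hy⟩ := hbij.surjOn hxS
    exact ⟨y, hSP hyS, hy⟩
  have hgPeq : g '' P = P := le_antisymm hgP hPgP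
  -- main argument
  intro x
  by_contra hx
  have hxN : x ∈ Pᶜ := hx
  set N : Set X := Pᶜ with hN
  -- N is invariant under forward iterates of f
  have hNf : ∀ y ∈ N, ∀ n : ℕ, (⇑f)^[n] y ∈ N := by
    intro y hy n hyn
    obtain ⟨k, hk1, hk⟩ := hyn
    refine hy ⟨k, hk1, ?_⟩
    have : (⇑f)^[n] ((⇑f)^[k] y) = (⇑f)^[n] y := by
      rw [← Function.iterate_add_apply, Nat.add_comm, Function.iterate_add_apply, hk]
    exact (f.injective.iterate n) this
  have hgN : g '' N = N := by
    rw [hN, Set.image_compl_eq g.bijective, hgPeq]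
  set K : Set X := closure N with hK
  have hKclosed : IsClosed K := isClosed_closure
  have hgK : g '' K = K := by rw [hK, g.image_closure, hgN]
  have hNK : N ⊆ K := subset_closure
  -- K has an isolated point
  have hnp : ¬ Preperfect K := by
    intro hpre
    have hperf : Perfect K := ⟨hKclosed, hpre⟩
    have hne : K.Nonempty := ⟨x, hNK hxN⟩
    obtain ⟨F, _, _, hFinj⟩ := hperf.exists_nat_bool_injection hne
    obtain ⟨e, he⟩ := Countable.exists_injective_nat X
    have hGinj : Function.Injective fun s : Set ℕ => e (F fun n => decide (n ∈ s)) := by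
      intro s t hst
      have h1 : (F fun n => decide (n ∈ s)) = F fun n => decide (n ∈ t) := he hst
      have h2 : (fun n => decide (n ∈ s)) = fun n => decide (n ∈ t) := hFinj h1
      ext n
      have := congrFun h2 n
      simpa using this
    exact Function.cantor_injective _ hGinj
  rw [preperfect_iff_nhds] at hnp
  push_neg at hnp
  obtain ⟨z, hzK, U, hU, hUz⟩ := hnp
  -- z ∈ N
  have hzN : z ∈ N := by
    obtain ⟨y, hyU, hyN⟩ := mem_closure_iff_nhds.mp hzK U hU
    have := hUz y ⟨hyU, hNK hyN⟩
    exact this ▸ hyN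
  -- iterates of z are pairwise distinct
  have hinj : ∀ m n : ℕ, (⇑f)^[m] z = (⇑f)^[n] z → m = n := by
    have key : ∀ m d : ℕ, (⇑f)^[m] z = (⇑f)^[m + d] z → d = 0 := by
      intro m d h
      by_contra hd
      have : (⇑f)^[m] ((⇑f)^[d] z) = (⇑f)^[m] z := by
        rw [← Function.iterate_add_apply]; exact h.symm
      have hz' : (⇑f)^[d] z = z := (f.injective.iterate m) this
      exact hzN ⟨d, Nat.one_le_iff_ne_zero.mpr hd, hz'⟩
    intro m n h
    rcases Nat.le_total m n with hmn | hmn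
    · obtain ⟨d, rfl⟩ := Nat.exists_eq_add_of_le hmn
      simp [key m d h]
    · obtain ⟨d, rfl⟩ := Nat.exists_eq_add_of_le hmn
      simp [key n d h.symm]
  -- g z ∈ K
  have hgzK : g z ∈ K := by
    refine hKclosed.mem_of_tendsto (hg z) (Eventually.of_forall fun n => ?_)
    exact hNK (hNf z hzN n)
  -- g z is isolated in K
  have hVnhds : g '' U ∈ 𝓝 (g z) := g.isOpenMap.image_mem_nhds hU
  have hVK : ∀ y ∈ (g '' U) ∩ K, y = g z := by
    rintro y ⟨⟨u, huU, rfl⟩, hyK⟩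
    have : g u ∈ g '' K := by rw [hgK]; exact hyK
    obtain ⟨w, hwK, hw⟩ := this
    have huw : w = u := g.injective hw
    have : u = z := hUz u ⟨huU, huw ▸ hwK⟩
    rw [this]
  -- the set of times the orbit of z hits g z is in p, but it is a subsingleton
  have hT : {n : ℕ | (⇑f)^[n] z = g z} ∈ p := by
    have h1 : {n : ℕ | (⇑f)^[n] z ∈ g '' U} ∈ p := (hg z) hVnhds
    refine Filter.mem_of_superset h1 fun n hn => ?_
    exact hVK _ ⟨hn, hNK (hNf z hzN n)⟩
  have hTsub : {n : ℕ | (⇑f)^[n] z = g z}.Subsingleton := by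
    intro m hm n hn
    exact hinj m n (hm.trans hn.symm)
  obtain ⟨a, _, hpa⟩ := Ultrafilter.eq_pure_of_finite_mem hTsub.finite hT
  exact hp a hpa
end

section
/- Let X be a compact metric countable space and f : X → X a homeomorphism. Then every point of X is periodic if, and only if, E(X,f,ℕ) = E(X,f,ℤ). -/
open Filter Topology

lemma not_countable_cantor' : ¬ Countable (ℕ → Bool) := by
  intro h
  have hc : Countable (Set ℕ) := by
    classical
    exact Function.Injective.countable (f := fun (s : Set ℕ) (n : ℕ) => decide (n ∈ s))
      (fun s t hst => by ext n; simpa using congrFun hst n)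
  obtain ⟨g, hg⟩ := exists_injective_nat (Set ℕ)
  exact Function.cantor_injective g hg

lemma exists_isolated_point' {X : Type*} [MetricSpace X] [CompactSpace X] [Countable X]
    {C : Set X} (hC : IsClosed C) (hne : C.Nonempty) :
    ∃ z ∈ C, ∃ V : Set X, IsOpen V ∧ V ∩ C = {z} := by
  by_contra hcon
  push_neg at hcon
  have hperf : Perfect C := by
    refine ⟨hC, ?_⟩
    intro z hz
    rw [accPt_iff_nhds]
    intro U hU
    obtain ⟨V, hVU, hVopen, hzV⟩ := mem_nhds_iff.mp hU
    have hne' : V ∩ C ≠ {z} := hcon z hz V hVopen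
    have hsub : {z} ⊆ V ∩ C := by
      intro y hy; rcases hy with rfl; exact ⟨hzV, hz⟩
    obtain ⟨y, hyVC, hyz⟩ := Set.exists_of_ssubset (hsub.ssubset_of_ne (Ne.symm hne'))
    exact ⟨y, ⟨hVU hyVC.1, hyVC.2⟩, fun h => hyz (by simp [h])⟩
  obtain ⟨g, hgC, _, hginj⟩ := hperf.exists_nat_bool_injection hne
  exact not_countable_cantor' hginj.countable

/-- Let `X` be a compact metric countable space and `f : X → X` a homeomorphism.
Every point of `X` is periodic iff `E(X,f,ℕ) = E(X,f,ℤ)`. -/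
theorem every_point_periodic_iff_ellis_N_eq_ellis_Z
    {X : Type*} [MetricSpace X] [CompactSpace X] [Countable X] [Nonempty X]
    (f : X ≃ₜ X) :
    (∀ x : X, ∃ n : ℕ, 1 ≤ n ∧ (⇑f)^[n] x = x) ↔
      closure {g : X → X | ∃ n : ℕ, g = (⇑f)^[n]} =
        closure {g : X → X | ∃ n : ℤ, g = ⇑(f.toEquiv ^ n)} := by
  have hcoe : ∀ m : ℕ, ⇑(f.toEquiv ^ (m:ℤ)) = (⇑f)^[m] := by
    intro m; rw [zpow_natCast, Equiv.Perm.coe_pow]; rfl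
  constructor
  · intro h
    apply Set.Subset.antisymm
    · apply closure_mono
      rintro g ⟨n, rfl⟩
      exact ⟨(n:ℤ), (hcoe n).symm⟩
    · apply closure_minimal _ isClosed_closure
      rintro g ⟨n, rfl⟩
      rcases le_or_gt 0 n with hn | hn
      · obtain ⟨m, rfl⟩ := Int.eq_ofNat_of_zero_le hn
        exact subset_closure ⟨m, (hcoe m).symm⟩
      · set k : ℕ := n.natAbs with hkdef
        have hk : n = -(k:ℤ) := by omega
        rw [mem_closure_iff_nhds]
        intro U hU
        rw [nhds_pi, Filter.mem_pi] at hU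
        obtain ⟨I, hIfin, V, hV, hVU⟩ := hU
        choose p hp1 hp2 using h
        set L : ℕ := ∏ x ∈ hIfin.toFinset, p x with hLdef
        have hL1 : 1 ≤ L := Finset.one_le_prod' fun x _ => hp1 x
        refine ⟨(⇑f)^[k * L - k], hVU ?_, ⟨k * L - k, rfl⟩⟩
        intro x hxI
        have hfix : (⇑f)^[k * L] x = x := by
          obtain ⟨c, hc⟩ := Finset.dvd_prod_of_mem p (hIfin.mem_toFinset.2 hxI)
          have h1 : k * L = p x * (k * c) := by rw [hLdef, hc]; ring
          rw [h1, Function.iterate_mul]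
          exact Function.iterate_fixed (hp2 x) _
        have heq : (⇑f)^[k * L - k] x = (f.toEquiv ^ n) x := by
          have hinj : Function.Injective ((⇑f)^[k]) := f.injective.iterate k
          apply hinj
          rw [← Function.iterate_add_apply]
          have hkL : k ≤ k * L := le_mul_of_one_le_right (Nat.zero_le k) hL1
          have h2 : k + (k * L - k) = k * L := by omega
          rw [h2, hfix]
          have h3 : (⇑f)^[k] ((f.toEquiv ^ n) x) = (f.toEquiv ^ ((k:ℤ) + n)) x := by
            rw [← hcoe k, ← Equiv.Perm.mul_apply, ← zpow_add]
          rw [h3, hk]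
          simp
        rw [heq]
        exact mem_of_mem_nhds (hV x)
  · intro hcl x
    set orb : Set X := Set.range (fun m : ℕ => (⇑f)^[m] x) with horb
    obtain ⟨z, hzW, V, hVopen, hVW⟩ :=
      exists_isolated_point' (isClosed_closure (s := orb)) ⟨x, subset_closure ⟨0, rfl⟩⟩
    have hzV : z ∈ V := by
      have : z ∈ ({z} : Set X) := rfl
      rw [← hVW] at this; exact this.1
    -- z is in the orbit
    obtain ⟨y, hyV, m, hym⟩ := mem_closure_iff_nhds.mp hzW V (hVopen.mem_nhds hzV)
    have hmz : (⇑f)^[m] x = z := by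
      have : y ∈ V ∩ closure orb := ⟨hyV, subset_closure ⟨m, hym⟩⟩
      rw [hVW] at this
      rw [show ((⇑f)^[m] x) = y from hym]
      exact this
    -- f⁻¹ is in the closure of the positive iterates
    have hgA : ⇑(f.toEquiv ^ (-1:ℤ)) ∈ closure {g : X → X | ∃ n : ℕ, g = (⇑f)^[n]} := by
      rw [hcl]
      exact subset_closure ⟨-1, rfl⟩
    -- evaluation at f^[m+1] x
    set pt : X := (⇑f)^[m+1] x with hpt
    have hgpt : ⇑(f.toEquiv ^ (-1:ℤ)) pt = z := by
      rw [← hmz, hpt, Function.iterate_succ_apply', zpow_neg_one]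
      exact Equiv.symm_apply_apply f.toEquiv _
    have hUnhds : (fun h : X → X => h pt) ⁻¹' V ∈ 𝓝 (⇑(f.toEquiv ^ (-1:ℤ))) := by
      refine ((hVopen.preimage (continuous_apply pt)).mem_nhds ?_)
      show (⇑(f.toEquiv ^ (-1:ℤ))) pt ∈ V
      rw [hgpt]
      exact hzV
    obtain ⟨h', hh'V, n, rfl⟩ := mem_closure_iff_nhds.mp hgA _ hUnhds
    have hfin : (⇑f)^[n] pt = z := by
      have : (⇑f)^[n] pt ∈ V ∩ closure orb := by
        refine ⟨hh'V, subset_closure ⟨n + (m+1), ?_⟩⟩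
        simp [hpt, Function.iterate_add_apply]
      rw [hVW] at this
      exact this
    refine ⟨n + 1, Nat.le_add_left 1 n, ?_⟩
    have hinj : Function.Injective ((⇑f)^[m]) := f.injective.iterate m
    apply hinj
    have h4 : (⇑f)^[n] pt = (⇑f)^[m] ((⇑f)^[n+1] x) := by
      rw [hpt, ← Function.iterate_add_apply, ← Function.iterate_add_apply]
      congr 1
      omega
    rw [← h4, hfin, hmz]
end

section
/- Let X be a compact metric space and f : X → X a homeomorphism such that (X,f) is WAP and such that some point x ∈ X has dense ℤ-orbit {f^n(x) : n ∈ ℤ}. Let p be an ultrafilter on ℕ and (n_i)_i a sequence of natural numbers such that f^{n_i}(x) converges to f^p(x) as i → ∞. Then for every y ∈ X, f^{n_i}(y) converges to f^p(y). -/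
open Filter Topology

private lemma mapClusterPt_eq_of_tendsto {X ι : Type*} [TopologicalSpace X] [T2Space X]
    {l : Filter ι} {u : ι → X} {a b : X} (h : MapClusterPt a l u)
    (ht : Tendsto u l (𝓝 b)) : a = b := by
  have hne : NeBot (𝓝 a ⊓ map u l) := h
  have : 𝓝 a ⊓ map u l ≤ 𝓝 a ⊓ 𝓝 b := inf_le_inf_left _ ht
  exact eq_of_nhds_neBot (hne.mono this)

/-- Let `X` be a compact metric space and `f : X → X` a homeomorphism such that `(X,f)`
is WAP (every function in `E(X,f,ℤ)` is continuous) and some point `x` has dense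
`ℤ`-orbit. If `p` is an ultrafilter on `ℕ`, `f^p` its `p`-iterate, and `(n_i)_i` is a
sequence of naturals with `f^{n_i}(x) → f^p(x)`, then `f^{n_i}(y) → f^p(y)` for every `y`. -/
theorem wap_dense_orbit_pointwise_convergence
    {X : Type*} [MetricSpace X] [CompactSpace X] [Nonempty X]
    (f : X ≃ₜ X)
    (hwap : ∀ g ∈ closure {g : X → X | ∃ n : ℤ, g = ⇑(f.toEquiv ^ n)}, Continuous g)
    (x : X) (hx : Dense (Set.range fun n : ℤ => (f.toEquiv ^ n) x))
    (p : Ultrafilter ℕ) (fp : X → X)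
    (hfp : ∀ z : X, Tendsto (fun n : ℕ => (⇑f)^[n] z) ↑p (𝓝 (fp z)))
    (ni : ℕ → ℕ)
    (hni : Tendsto (fun i : ℕ => (⇑f)^[ni i] x) atTop (𝓝 (fp x))) :
    ∀ y : X, Tendsto (fun i : ℕ => (⇑f)^[ni i] y) atTop (𝓝 (fp y)) := by
  set S : Set (X → X) := {g : X → X | ∃ n : ℤ, g = ⇑(f.toEquiv ^ n)} with hS
  -- natural iterates belong to `S`
  have hpow : ∀ n : ℕ, (fun z : X => (⇑f)^[n] z) = ⇑(f.toEquiv ^ (n : ℤ)) := by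
    intro n
    rw [zpow_natCast, Equiv.Perm.coe_pow]
    rfl
  have hmemS : ∀ n : ℕ, (fun z : X => (⇑f)^[n] z) ∈ S := fun n => ⟨(n : ℤ), hpow n⟩
  -- `fp` belongs to the closure of `S`, hence is continuous
  have hfpS : fp ∈ closure S := by
    have h1 : Tendsto (fun n : ℕ => (fun z : X => (⇑f)^[n] z)) ↑p (𝓝 fp) :=
      tendsto_pi_nhds.2 hfp
    exact mem_closure_of_tendsto h1 (Eventually.of_forall hmemS)
  have hfpc : Continuous fp := hwap fp hfpS
  -- key commutation: `fp` commutes with the `ℤ`-powers of `f`, evaluated at `x`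
  have hcomm : ∀ m : ℤ, ∀ n : ℕ, (⇑f)^[n] ((f.toEquiv ^ m) x) = (f.toEquiv ^ m) ((⇑f)^[n] x) := by
    intro m n
    have := congrFun (hpow n) ((f.toEquiv ^ m) x)
    rw [this, congrFun (hpow n) x, ← Equiv.Perm.mul_apply, ← Equiv.Perm.mul_apply,
      ← zpow_add, ← zpow_add, add_comm]
  have hcontm : ∀ m : ℤ, Continuous ⇑(f.toEquiv ^ m) := fun m =>
    hwap _ (subset_closure ⟨m, rfl⟩)
  have hfpcomm : ∀ m : ℤ, fp ((f.toEquiv ^ m) x) = (f.toEquiv ^ m) (fp x) := by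
    intro m
    refine tendsto_nhds_unique (hfp ((f.toEquiv ^ m) x)) ?_
    have : Tendsto (fun n : ℕ => (f.toEquiv ^ m) ((⇑f)^[n] x)) ↑p (𝓝 ((f.toEquiv ^ m) (fp x))) :=
      ((hcontm m).continuousAt.tendsto).comp (hfp x)
    refine this.congr fun n => (hcomm m n).symm
  -- the sequence of maps, seen in the product space `X → X`
  set F : ℕ → (X → X) := fun i => fun z => (⇑f)^[ni i] z with hF
  have hkey : Tendsto F atTop (𝓝 fp) := by
    refine tendsto_nhds_of_unique_mapClusterPt fun g hg => ?_
    -- g is in the closure of S, hence continuous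
    have hgS : g ∈ closure S := by
      rw [mem_closure_iff_clusterPt]
      refine hg.clusterPt.mono ?_
      rw [le_principal_iff, mem_map]
      exact Eventually.of_forall fun i => hmemS (ni i)
    have hgc : Continuous g := hwap g hgS
    -- g agrees with fp on the dense orbit
    have horb : ∀ m : ℤ, g ((f.toEquiv ^ m) x) = fp ((f.toEquiv ^ m) x) := by
      intro m
      have hev : MapClusterPt (g ((f.toEquiv ^ m) x)) atTop
          (fun i => F i ((f.toEquiv ^ m) x)) :=
        hg.continuousAt_comp (continuous_apply ((f.toEquiv ^ m) x)).continuousAt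
      have hconv : Tendsto (fun i => F i ((f.toEquiv ^ m) x)) atTop
          (𝓝 ((f.toEquiv ^ m) (fp x))) := by
        have : Tendsto (fun i => (f.toEquiv ^ m) ((⇑f)^[ni i] x)) atTop
            (𝓝 ((f.toEquiv ^ m) (fp x))) := ((hcontm m).continuousAt.tendsto).comp hni
        exact this.congr fun i => (hcomm m (ni i)).symm
      rw [mapClusterPt_eq_of_tendsto hev hconv, hfpcomm m]
    exact hgc.ext_on hx hfpc (by rintro _ ⟨m, rfl⟩; exact horb m)
  intro y
  have := tendsto_pi_nhds.1 hkey y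
  exact this
end

section
/- Let X be a compact metric space and f : X → X a homeomorphism such that (X,f) is equicontinuous. Then for every ultrafilter p on ℕ, (f^{-1})^p ∘ f^p and f^p ∘ (f^{-1})^p both equal the identity map of X; that is, (f^p)^{-1} = (f^{-1})^p. -/
open Filter Topology

lemma pow_coe_aux {X : Type*} [TopologicalSpace X] (f : X ≃ₜ X) (n : ℕ) :
    ⇑(f.toEquiv ^ (n:ℤ)) = (⇑f)^[n] := by
  rw [zpow_natCast, Equiv.Perm.coe_pow]
  rfl

lemma pow_neg_coe_aux {X : Type*} [TopologicalSpace X] (f : X ≃ₜ X) (n : ℕ) :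
    ⇑(f.toEquiv ^ (-(n:ℤ))) = (⇑f.symm)^[n] := by
  rw [zpow_neg, zpow_natCast, ← inv_pow, Equiv.Perm.coe_pow]
  rfl

/-- Let `X` be a compact metric space and `f : X → X` a homeomorphism such that `(X,f)`
is equicontinuous. Then for every ultrafilter `p` on `ℕ`, `(f⁻¹)^p ∘ f^p` and
`f^p ∘ (f⁻¹)^p` both equal the identity of `X`; that is, `(f^p)⁻¹ = (f⁻¹)^p`. -/
theorem equicontinuous_p_iterate_inverse
    {X : Type*} [MetricSpace X] [CompactSpace X] [Nonempty X]
    (f : X ≃ₜ X)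
    (hequi : ∀ ε > (0:ℝ), ∃ δ > (0:ℝ), ∀ x y : X, dist x y < δ →
      ∀ n : ℤ, dist ((f.toEquiv ^ n) x) ((f.toEquiv ^ n) y) < ε)
    (p : Ultrafilter ℕ) (fp gp : X → X)
    (hfp : ∀ y : X, Tendsto (fun n : ℕ => (⇑f)^[n] y) ↑p (𝓝 (fp y)))
    (hgp : ∀ y : X, Tendsto (fun n : ℕ => (⇑f.symm)^[n] y) ↑p (𝓝 (gp y))) :
    gp ∘ fp = id ∧ fp ∘ gp = id := by
  constructor
  · funext x
    have key : Tendsto (fun n : ℕ => (⇑f.symm)^[n] (fp x)) ↑p (𝓝 x) := by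
      rw [Metric.tendsto_nhds]
      intro ε hε
      obtain ⟨δ, hδ, hδ'⟩ := hequi ε hε
      have h1 : ∀ᶠ n in (↑p : Filter ℕ), dist ((⇑f)^[n] x) (fp x) < δ :=
        (Metric.tendsto_nhds.mp (hfp x)) δ hδ
      filter_upwards [h1] with n hn
      have := hδ' (fp x) ((⇑f)^[n] x) (by rwa [dist_comm]) (-(n:ℤ))
      rw [pow_neg_coe_aux] at this
      rwa [Function.LeftInverse.iterate f.symm_apply_apply n x] at this
    exact tendsto_nhds_unique (hgp (fp x)) key
  · funext x
    have key : Tendsto (fun n : ℕ => (⇑f)^[n] (gp x)) ↑p (𝓝 x) := by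
      rw [Metric.tendsto_nhds]
      intro ε hε
      obtain ⟨δ, hδ, hδ'⟩ := hequi ε hε
      have h1 : ∀ᶠ n in (↑p : Filter ℕ), dist ((⇑f.symm)^[n] x) (gp x) < δ :=
        (Metric.tendsto_nhds.mp (hgp x)) δ hδ
      filter_upwards [h1] with n hn
      have := hδ' (gp x) ((⇑f.symm)^[n] x) (by rwa [dist_comm]) ((n:ℤ))
      rw [pow_coe_aux] at this
      rwa [Function.LeftInverse.iterate f.apply_symm_apply n x] at this
    exact tendsto_nhds_unique (hfp (gp x)) key
end

section
/- Let X be a compact metric space and f : X → X a homeomorphism such that some point x ∈ X has dense ℤ-orbit {f^n(x) : n ∈ ℤ}. Then E(X,f,ℤ) is commutative (g ∘ h = h ∘ g for all g, h ∈ E(X,f,ℤ)) if, and only if, (X,f) is WAP. -/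
open Filter Topology

private lemma contpow' {X : Type*} [TopologicalSpace X] (g : X ≃ₜ X) (k : ℕ) :
    Continuous ⇑(g.toEquiv ^ k) := by
  induction k with
  | zero => simpa using continuous_id
  | succ k ih =>
    rw [pow_succ, Equiv.Perm.coe_mul]
    exact ih.comp g.continuous

private lemma contzpow' {X : Type*} [TopologicalSpace X] (f : X ≃ₜ X) (n : ℤ) :
    Continuous ⇑(f.toEquiv ^ n) := by
  cases n with
  | ofNat k => rw [Int.ofNat_eq_coe, zpow_natCast]; exact contpow' f k
  | negSucc k =>
    rw [zpow_negSucc, ← inv_pow]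
    have h : (f.toEquiv)⁻¹ = f.symm.toEquiv := rfl
    rw [h]
    exact contpow' f.symm k.succ

/-- Every element of the enveloping semigroup commutes with each `f^n`. -/
private lemma comm_zpow {X : Type*} [MetricSpace X] [CompactSpace X]
    (f : X ≃ₜ X) {g : X → X}
    (hg : g ∈ closure {g : X → X | ∃ n : ℤ, g = ⇑(f.toEquiv ^ n)}) (n : ℤ) (y : X) :
    g ((f.toEquiv ^ n) y) = (f.toEquiv ^ n) (g y) := by
  obtain ⟨U, hUS, hUg⟩ := mem_closure_iff_ultrafilter.mp hg
  have hpt : ∀ z : X, Tendsto (fun φ : X → X => φ z) U (𝓝 (g z)) :=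
    tendsto_pi_nhds.mp hUg
  have h2 : Tendsto (fun φ : X → X => (f.toEquiv ^ n) (φ y)) U
      (𝓝 ((f.toEquiv ^ n) (g y))) :=
    ((contzpow' f n).continuousAt).tendsto.comp (hpt y)
  have heq : ∀ᶠ φ : X → X in U, φ ((f.toEquiv ^ n) y) = (f.toEquiv ^ n) (φ y) := by
    filter_upwards [hUS] with φ hφ
    obtain ⟨m, rfl⟩ := hφ
    have : f.toEquiv ^ m * f.toEquiv ^ n = f.toEquiv ^ n * f.toEquiv ^ m := by
      rw [← zpow_add, ← zpow_add, add_comm]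
    calc (f.toEquiv ^ m) ((f.toEquiv ^ n) y)
        = (f.toEquiv ^ m * f.toEquiv ^ n) y := rfl
      _ = (f.toEquiv ^ n * f.toEquiv ^ m) y := by rw [this]
      _ = (f.toEquiv ^ n) ((f.toEquiv ^ m) y) := rfl
  exact tendsto_nhds_unique ((hpt _).congr' heq) h2

/-- Let `X` be a compact metric space and `f : X → X` a homeomorphism such that some
point `x` has dense `ℤ`-orbit. Then `E(X,f,ℤ)` is commutative iff `(X,f)` is WAP
(every function in `E(X,f,ℤ)` is continuous). -/
theorem dense_orbit_commutative_iff_wap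
    {X : Type*} [MetricSpace X] [CompactSpace X] [Nonempty X]
    (f : X ≃ₜ X) (x : X)
    (hx : Dense (Set.range fun n : ℤ => (f.toEquiv ^ n) x)) :
    (∀ g ∈ closure {g : X → X | ∃ n : ℤ, g = ⇑(f.toEquiv ^ n)},
      ∀ h ∈ closure {g : X → X | ∃ n : ℤ, g = ⇑(f.toEquiv ^ n)}, g ∘ h = h ∘ g) ↔
    (∀ g ∈ closure {g : X → X | ∃ n : ℤ, g = ⇑(f.toEquiv ^ n)}, Continuous g) := by
  set S : Set (X → X) := {g : X → X | ∃ n : ℤ, g = ⇑(f.toEquiv ^ n)} with hS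
  constructor
  · -- commutative → WAP
    intro hcomm g hg
    -- every point is the image of x under some element of closure S
    have hEcomp : IsCompact (closure S) := isClosed_closure.isCompact
    have hsurj : ∀ w : X, ∃ h ∈ closure S, h x = w := by
      intro w
      have himg : IsCompact ((fun φ : X → X => φ x) '' closure S) :=
        hEcomp.image (continuous_apply x)
      have hsub : Set.range (fun n : ℤ => (f.toEquiv ^ n) x)
          ⊆ (fun φ : X → X => φ x) '' closure S := by
        rintro _ ⟨n, rfl⟩
        exact ⟨⇑(f.toEquiv ^ n), subset_closure ⟨n, rfl⟩, rfl⟩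
      have hdense : Dense ((fun φ : X → X => φ x) '' closure S) := hx.mono hsub
      have : (fun φ : X → X => φ x) '' closure S = Set.univ := by
        rw [← himg.isClosed.closure_eq, hdense.closure_eq]
      obtain ⟨h, hhE, hhx⟩ := (this ▸ Set.mem_univ w : w ∈ _)
      exact ⟨h, hhE, hhx⟩
    choose s hsE hsx using hsurj
    have key : ∀ w : X, g w = s w (g x) := by
      intro w
      have := congrFun (hcomm g hg (s w) (hsE w)) x
      simpa [Function.comp, hsx w] using this
    rw [continuous_iff_continuousAt]
    intro y
    rw [continuousAt_iff_ultrafilter]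
    intro U hU
    set V : Ultrafilter (X → X) := U.map s with hV
    have hVh : ↑V ≤ 𝓝 V.lim := V.le_nhds_lim
    set h : X → X := V.lim with hh
    have hpt : ∀ z : X, Tendsto (fun φ : X → X => φ z) V (𝓝 (h z)) :=
      tendsto_pi_nhds.mp hVh
    have hhE : h ∈ closure S := by
      rw [← closure_closure (s := S)]
      refine mem_closure_iff_ultrafilter.mpr ⟨V, ?_, hVh⟩
      exact Ultrafilter.mem_map.mpr (by filter_upwards with w using hsE w)
    have hhx : h x = y := by
      have t1 : Tendsto (fun w : X => s w x) U (𝓝 (h x)) := (hpt x).comp tendsto_map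
      have t2 : Tendsto (fun w : X => s w x) U (𝓝 y) := by
        refine Tendsto.congr (fun w => (hsx w).symm) ?_
        exact hU
      exact tendsto_nhds_unique t1 t2
    have hgy : g y = h (g x) := by
      have := congrFun (hcomm g hg h hhE) x
      simpa [Function.comp, hhx] using this
    have t3 : Tendsto (fun w : X => s w (g x)) U (𝓝 (h (g x))) :=
      (hpt (g x)).comp tendsto_map
    rw [hgy]
    exact t3.congr (fun w => (key w).symm)
  · -- WAP → commutative
    intro hcont g hg h hh
    funext y
    obtain ⟨V, hVS, hVh⟩ := mem_closure_iff_ultrafilter.mp hh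
    have hpt : ∀ z : X, Tendsto (fun φ : X → X => φ z) V (𝓝 (h z)) :=
      tendsto_pi_nhds.mp hVh
    have t1 : Tendsto (fun φ : X → X => g (φ y)) V (𝓝 (g (h y))) :=
      ((hcont g hg).continuousAt).tendsto.comp (hpt y)
    have ev : ∀ᶠ φ : X → X in V, g (φ y) = φ (g y) := by
      filter_upwards [hVS] with φ hφ
      obtain ⟨n, rfl⟩ := hφ
      exact comm_zpow f hg n y
    have t2 : Tendsto (fun φ : X → X => φ (g y)) V (𝓝 (h (g y))) := hpt (g y)
    exact tendsto_nhds_unique (t1.congr' ev) t2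
end

section
/- Let X be a compact metric space and f : X → X a homeomorphism such that (X,f) is distal and E(X,f,ℤ) is abelian (g ∘ h = h ∘ g for all g, h ∈ E(X,f,ℤ)). Then for every ultrafilter p on ℕ, (f^{-1})^p ∘ f^p and f^p ∘ (f^{-1})^p both equal the identity map of X; that is, (f^p)^{-1} = (f^{-1})^p. -/
open Filter Topology Set

/-- Let `X` be a compact metric space and `f : X → X` a homeomorphism such that `(X,f)`
is distal and `E(X,f,ℤ)` is abelian. Then for every ultrafilter `p` on `ℕ`,
`(f⁻¹)^p ∘ f^p` and `f^p ∘ (f⁻¹)^p` both equal the identity; i.e. `(f^p)⁻¹ = (f⁻¹)^p`. -/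
theorem distal_abelian_p_iterate_inverse
    {X : Type*} [MetricSpace X] [CompactSpace X] [Nonempty X]
    (f : X ≃ₜ X)
    (hdistal : ∀ x y : X, x ≠ y →
      ∃ ε > (0:ℝ), ∀ n : ℤ, ε ≤ dist ((f.toEquiv ^ n) x) ((f.toEquiv ^ n) y))
    (habel : ∀ g ∈ closure {g : X → X | ∃ n : ℤ, g = ⇑(f.toEquiv ^ n)},
      ∀ h ∈ closure {g : X → X | ∃ n : ℤ, g = ⇑(f.toEquiv ^ n)}, g ∘ h = h ∘ g)
    (p : Ultrafilter ℕ) (fp gp : X → X)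
    (hfp : ∀ y : X, Tendsto (fun n : ℕ => (⇑f)^[n] y) ↑p (𝓝 (fp y)))
    (hgp : ∀ y : X, Tendsto (fun n : ℕ => (⇑f.symm)^[n] y) ↑p (𝓝 (gp y))) :
    gp ∘ fp = id ∧ fp ∘ gp = id := by
  classical
  set S : Set (X → X) := {g : X → X | ∃ n : ℤ, g = ⇑(f.toEquiv ^ n)} with hSdef
  set E : Set (X → X) := closure S with hEdef
  -- basic facts about the integer powers of `f`
  have hT0 : ∀ m : ℕ, ⇑(f.toEquiv ^ (m : ℤ)) = (⇑f)^[m] := by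
    intro m
    rw [zpow_natCast, ← Equiv.Perm.iterate_eq_pow]
    rfl
  have hTneg : ∀ m : ℕ, ⇑(f.toEquiv ^ (-(m : ℤ))) = (⇑f.symm)^[m] := by
    intro m
    rw [zpow_neg, zpow_natCast, ← inv_pow, ← Equiv.Perm.iterate_eq_pow]
    rfl
  have hTcont : ∀ n : ℤ, Continuous ⇑(f.toEquiv ^ n) := by
    intro n
    rcases n with m | m
    · rw [Int.ofNat_eq_coe, hT0]; exact f.continuous.iterate m
    · rw [Int.negSucc_eq, show -((m:ℤ)+1) = -(((m+1:ℕ)):ℤ) by push_cast; ring, hTneg]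
      exact f.symm.continuous.iterate (m+1)
  have hTadd : ∀ m n : ℤ, ⇑(f.toEquiv ^ (m + n)) = ⇑(f.toEquiv ^ m) ∘ ⇑(f.toEquiv ^ n) := by
    intro m n
    rw [zpow_add]
    rfl
  have hTmem : ∀ n : ℤ, ⇑(f.toEquiv ^ n) ∈ E := fun n => subset_closure ⟨n, rfl⟩
  have hEclosed : IsClosed E := isClosed_closure
  have hEcompact : IsCompact E := hEclosed.isCompact
  -- every element of E is injective (by distality)
  have hinj : ∀ h ∈ E, Function.Injective h := by
    intro h hh a b hab
    by_contra hne
    obtain ⟨ε, hε, hsep⟩ := hdistal a b hne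
    have hVopen : IsOpen {g : X → X | dist (g a) (h a) < ε/2 ∧ dist (g b) (h b) < ε/2} :=
      ((isOpen_lt ((continuous_apply a).dist continuous_const) continuous_const).inter
        (isOpen_lt ((continuous_apply b).dist continuous_const) continuous_const))
    have hmem : h ∈ {g : X → X | dist (g a) (h a) < ε/2 ∧ dist (g b) (h b) < ε/2} :=
      ⟨by simpa using half_pos hε, by simpa using half_pos hε⟩
    obtain ⟨g, hgV, hgS⟩ := mem_closure_iff.mp hh _ hVopen hmem
    obtain ⟨n, rfl⟩ := hgS
    have h1 := hsep n
    have h2 : dist (⇑(f.toEquiv ^ n) a) (⇑(f.toEquiv ^ n) b) ≤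
        dist (⇑(f.toEquiv ^ n) a) (h a) + dist (h b) (⇑(f.toEquiv ^ n) b) := by
      rw [hab]
      exact dist_triangle _ _ _
    have h3 := hgV.1
    have h4 := hgV.2
    rw [dist_comm (h b)] at h2
    linarith
  -- E is closed under composition
  have hTcomp : ∀ n : ℤ, ∀ h ∈ E, ⇑(f.toEquiv ^ n) ∘ h ∈ E := by
    intro n h hh
    have hcont : Continuous (fun g : X → X => ⇑(f.toEquiv ^ n) ∘ g) :=
      continuous_pi fun z => (hTcont n).comp (continuous_apply z)
    have hmem : ⇑(f.toEquiv ^ n) ∘ h ∈ (fun g : X → X => ⇑(f.toEquiv ^ n) ∘ g) '' closure S :=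
      ⟨h, hh, rfl⟩
    have h2 := (image_closure_subset_closure_image hcont) hmem
    refine closure_mono ?_ h2
    rintro _ ⟨_, ⟨m, rfl⟩, rfl⟩
    exact ⟨n + m, (hTadd n m).symm⟩
  have hcompE : ∀ g ∈ E, ∀ h ∈ E, g ∘ h ∈ E := by
    intro g hg h hh
    have hcont : Continuous (fun k : X → X => k ∘ h) :=
      continuous_pi fun z => continuous_apply (h z)
    have hmem : g ∘ h ∈ (fun k : X → X => k ∘ h) '' closure S := ⟨g, hg, rfl⟩
    have h2 := (image_closure_subset_closure_image hcont) hmem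
    have h3 : (fun k : X → X => k ∘ h) '' S ⊆ E := by
      rintro _ ⟨_, ⟨m, rfl⟩, rfl⟩
      exact hTcomp m h hh
    have h4 := closure_mono h3 h2
    rwa [hEclosed.closure_eq] at h4
  -- Ellis idempotent argument: left inverses exist in E
  letI : Semigroup (X → X) := { mul := fun a b => a ∘ b, mul_assoc := fun _ _ _ => rfl }
  have hL5 : ∀ h ∈ E, ∃ h' ∈ E, h' ∘ h = id := by
    intro h hh
    have hmull : ∀ r : X → X, Continuous (· * r) :=
      fun r => continuous_pi fun z => continuous_apply (r z)
    have hsadd : ∀ a ∈ (fun g : X → X => g ∘ h) '' E, ∀ b ∈ (fun g : X → X => g ∘ h) '' E,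
        a * b ∈ (fun g : X → X => g ∘ h) '' E := by
      rintro _ ⟨g, hg, rfl⟩ _ ⟨g', hg', rfl⟩
      exact ⟨g ∘ (h ∘ g'), hcompE g hg _ (hcompE h hh g' hg'), rfl⟩
    obtain ⟨e, hes, hee⟩ := exists_idempotent_in_compact_subsemigroup hmull
      ((fun g : X → X => g ∘ h) '' E)
      ⟨⇑(f.toEquiv ^ (0:ℤ)) ∘ h, ⟨_, hTmem 0, rfl⟩⟩
      (hEcompact.image (continuous_pi fun z => continuous_apply (h z)))
      hsadd
    obtain ⟨h', hh', rfl⟩ := hes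
    have heE : h' ∘ h ∈ E := hcompE h' hh' h hh
    refine ⟨h', hh', funext fun z => ?_⟩
    exact hinj _ heE (congrFun hee z)
  -- fp and gp belong to E
  have hfpE : fp ∈ E := by
    have ht : Tendsto (fun n : ℕ => ((⇑f)^[n] : X → X)) ↑p (𝓝 fp) := tendsto_pi_nhds.2 hfp
    refine mem_closure_of_tendsto ht ?_
    filter_upwards with n
    exact ⟨(n : ℤ), (hT0 n).symm⟩
  have hgpE : gp ∈ E := by
    have ht : Tendsto (fun n : ℕ => ((⇑f.symm)^[n] : X → X)) ↑p (𝓝 gp) := tendsto_pi_nhds.2 hgp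
    refine mem_closure_of_tendsto ht ?_
    filter_upwards with n
    exact ⟨-(n : ℤ), (hTneg n).symm⟩
  -- the main pointwise statement
  have main : ∀ x : X, fp (gp x) = x := by
    intro x
    set orb : Set X := {z : X | ∃ n : ℤ, z = ⇑(f.toEquiv ^ n) x} with horb
    set Y : Set X := closure orb with hYdef
    have hxY : x ∈ Y := subset_closure ⟨0, by simp⟩
    have hYclosed : IsClosed Y := isClosed_closure
    have hYinv : ∀ n : ℤ, ∀ z ∈ Y, ⇑(f.toEquiv ^ n) z ∈ Y := by
      intro n z hz
      have h1 : ⇑(f.toEquiv ^ n) z ∈ ⇑(f.toEquiv ^ n) '' closure orb := ⟨z, hz, rfl⟩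
      have h2 := (image_closure_subset_closure_image (hTcont n)) h1
      refine closure_mono ?_ h2
      rintro _ ⟨_, ⟨m, rfl⟩, rfl⟩
      exact ⟨n + m, (congrFun (hTadd n m) x).symm⟩
    have hEY : ∀ h ∈ E, ∀ z ∈ Y, h z ∈ Y := by
      intro h hh z hz
      have h1 : h z ∈ (fun g : X → X => g z) '' closure S := ⟨h, hh, rfl⟩
      have h2 := (image_closure_subset_closure_image (continuous_apply z)) h1
      have h3 : (fun g : X → X => g z) '' S ⊆ Y := by
        rintro _ ⟨_, ⟨m, rfl⟩, rfl⟩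
        exact hYinv m z hz
      have h4 := closure_mono h3 h2
      rwa [hYclosed.closure_eq] at h4
    have hExY : ∀ z ∈ Y, ∃ h ∈ E, h x = z := by
      intro z hz
      have hK : IsClosed ((fun g : X → X => g x) '' E) :=
        (hEcompact.image (continuous_apply x)).isClosed
      have horbK : orb ⊆ (fun g : X → X => g x) '' E := by
        rintro _ ⟨m, rfl⟩
        exact ⟨_, hTmem m, rfl⟩
      obtain ⟨h, hh, hx'⟩ := closure_minimal horbK hK hz
      exact ⟨h, hh, hx'⟩
    have hmin : ∀ z₀ ∈ Y, ∀ z ∈ Y, ∃ h ∈ E, h z₀ = z := by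
      intro z₀ hz₀ z hz
      obtain ⟨g₀, hg₀, hg₀x⟩ := hExY z₀ hz₀
      obtain ⟨g₀', hg₀', hg₀inv⟩ := hL5 g₀ hg₀
      have hxz₀ : g₀' z₀ = x := by
        rw [← hg₀x]
        exact congrFun hg₀inv x
      have hK : IsClosed ((fun g : X → X => g z₀) '' E) :=
        (hEcompact.image (continuous_apply z₀)).isClosed
      have horbK : orb ⊆ (fun g : X → X => g z₀) '' E := by
        rintro _ ⟨m, rfl⟩
        refine ⟨⇑(f.toEquiv ^ m) ∘ g₀', hTcomp m g₀' hg₀', ?_⟩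
        simp only [Function.comp_apply, hxz₀]
      obtain ⟨h, hh, hx'⟩ := closure_minimal horbK hK hz
      exact ⟨h, hh, hx'⟩
    -- every element of E is continuous on Y
    haveI hECS : CompactSpace ↥E := isCompact_iff_compactSpace.mp hEcompact
    have hcontY : ∀ h ∈ E, ContinuousOn h Y := by
      intro h hh
      set q : ↥E → ↥Y := fun k => ⟨k.1 x, hEY k.1 k.2 x hxY⟩ with hq
      have hqc : Continuous q :=
        ((continuous_apply x).comp continuous_subtype_val).subtype_mk _
      have hqs : Function.Surjective q := by
        rintro ⟨z, hz⟩
        obtain ⟨g, hg, hx'⟩ := hExY z hz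
        exact ⟨⟨g, hg⟩, Subtype.ext hx'⟩
      have hquot : IsQuotientMap q := (hqc.isClosedMap).isQuotientMap hqc hqs
      rw [continuousOn_iff_continuous_restrict, hquot.continuous_iff]
      have heq : (Y.restrict h) ∘ q = fun k : ↥E => k.1 (h x) := by
        funext k
        exact congrFun (habel h hh k.1 k.2) x
      change Continuous ((Y.restrict h) ∘ q)
      rw [heq]
      exact (continuous_apply (h x)).comp continuous_subtype_val
    -- choice of the sequence
    have hAne : ∀ k : ℕ, ∃ n : ℕ, dist ((⇑f)^[n] x) (fp x) < 1/(k+1) ∧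
        dist ((⇑f.symm)^[n] x) (gp x) < 1/(k+1) := by
      intro k
      have h1 := Metric.tendsto_nhds.1 (hfp x) (1/(k+1)) (by positivity)
      have h2 := Metric.tendsto_nhds.1 (hgp x) (1/(k+1)) (by positivity)
      exact (h1.and h2).exists
    choose nseq hn1 hn2 using hAne
    set gseq : ℕ → X → X := fun k => (⇑f)^[nseq k] with hgseq
    set hseq : ℕ → X → X := fun k => (⇑f.symm)^[nseq k] with hhseq
    have hgsY : ∀ k, ∀ z ∈ Y, gseq k z ∈ Y := by
      intro k z hz
      have he : gseq k z = ⇑(f.toEquiv ^ ((nseq k : ℕ) : ℤ)) z := by rw [hT0]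
      rw [he]; exact hYinv _ z hz
    have hhsY : ∀ k, ∀ z ∈ Y, hseq k z ∈ Y := by
      intro k z hz
      have he : hseq k z = ⇑(f.toEquiv ^ (-((nseq k : ℕ) : ℤ))) z := by rw [hTneg]
      rw [he]; exact hYinv _ z hz
    have hgx : Tendsto (fun k => gseq k x) atTop (𝓝 (fp x)) := by
      apply tendsto_iff_dist_tendsto_zero.2
      exact squeeze_zero (fun k => dist_nonneg) (fun k => (hn1 k).le)
        tendsto_one_div_add_atTop_nhds_zero_nat
    have hhx : Tendsto (fun k => hseq k x) atTop (𝓝 (gp x)) := by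
      apply tendsto_iff_dist_tendsto_zero.2
      exact squeeze_zero (fun k => dist_nonneg) (fun k => (hn2 k).le)
        tendsto_one_div_add_atTop_nhds_zero_nat
    have hfpxY : fp x ∈ Y := hEY fp hfpE x hxY
    have hgpxY : gp x ∈ Y := hEY gp hgpE x hxY
    -- pointwise convergence on all of Y
    have hgconv : ∀ z ∈ Y, Tendsto (fun k => gseq k z) atTop (𝓝 (fp z)) := by
      intro z hz
      obtain ⟨g, hg, rfl⟩ := hExY z hz
      have hc1 : ∀ k, gseq k (g x) = g (gseq k x) := by
        intro k
        have e1 := habel _ (hTmem ((nseq k : ℕ) : ℤ)) g hg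
        have e2 := congrFun e1 x
        rw [hT0] at e2
        exact e2
      have hc2 : fp (g x) = g (fp x) := congrFun (habel fp hfpE g hg) x
      have hwY : Tendsto (fun k => gseq k x) atTop (𝓝[Y] (fp x)) :=
        tendsto_nhdsWithin_iff.2 ⟨hgx, Eventually.of_forall fun k => hgsY k x hxY⟩
      have hcomp : Tendsto (fun k => g (gseq k x)) atTop (𝓝 (g (fp x))) :=
        Filter.Tendsto.comp (hcontY g hg (fp x) hfpxY) hwY
      rw [hc2]
      exact hcomp.congr (fun k => (hc1 k).symm)
    have hhconv : ∀ z ∈ Y, Tendsto (fun k => hseq k z) atTop (𝓝 (gp z)) := by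
      intro z hz
      obtain ⟨g, hg, rfl⟩ := hExY z hz
      have hc1 : ∀ k, hseq k (g x) = g (hseq k x) := by
        intro k
        have e1 := habel _ (hTmem (-((nseq k : ℕ) : ℤ))) g hg
        have e2 := congrFun e1 x
        rw [hTneg] at e2
        exact e2
      have hc2 : gp (g x) = g (gp x) := congrFun (habel gp hgpE g hg) x
      have hwY : Tendsto (fun k => hseq k x) atTop (𝓝[Y] (gp x)) :=
        tendsto_nhdsWithin_iff.2 ⟨hhx, Eventually.of_forall fun k => hhsY k x hxY⟩
      have hcomp : Tendsto (fun k => g (hseq k x)) atTop (𝓝 (g (gp x))) :=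
        Filter.Tendsto.comp (hcontY g hg (gp x) hgpxY) hwY
      rw [hc2]
      exact hcomp.congr (fun k => (hc1 k).symm)
    -- Baire category argument on Y
    haveI : CompactSpace ↥Y := isCompact_iff_compactSpace.mp (hYclosed.isCompact)
    haveI : Nonempty ↥Y := ⟨⟨x, hxY⟩⟩
    have hstar : ∃ a₀ : ↥Y, ∀ ε > (0:ℝ), ∃ N : ℕ, ∃ U : Set ↥Y, IsOpen U ∧ a₀ ∈ U ∧
        ∀ a ∈ U, ∀ k ≥ N, ∀ l ≥ N, dist (gseq k a.1) (gseq l a.1) ≤ ε := by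
      set A : ℕ → ℕ → Set ↥Y := fun j N =>
        {a : ↥Y | ∀ k ≥ N, ∀ l ≥ N, dist (gseq k a.1) (gseq l a.1) ≤ 1/(j+1)} with hA
      have hAclosed : ∀ j N, IsClosed (A j N) := by
        intro j N
        have he : A j N = ⋂ (k : ℕ) (_ : k ≥ N) (l : ℕ) (_ : l ≥ N),
            {a : ↥Y | dist (gseq k a.1) (gseq l a.1) ≤ 1/(j+1)} := by
          ext a
          simp only [hA, mem_setOf_eq, mem_iInter]
        rw [he]
        refine isClosed_iInter fun k => isClosed_iInter fun _ =>
          isClosed_iInter fun l => isClosed_iInter fun _ => ?_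
        exact isClosed_le (Continuous.dist
          ((f.continuous.iterate _).comp continuous_subtype_val)
          ((f.continuous.iterate _).comp continuous_subtype_val)) continuous_const
      have hAcover : ∀ j, ⋃ N, A j N = univ := by
        intro j
        rw [eq_univ_iff_forall]
        intro a
        have hcauchy : CauchySeq (fun k => gseq k a.1) := (hgconv a.1 a.2).cauchySeq
        obtain ⟨N, hN⟩ := Metric.cauchySeq_iff.1 hcauchy (1/(j+1)) (by positivity)
        exact mem_iUnion.2 ⟨N, fun k hk l hl => (hN k hk l hl).le⟩
      have hdense : Dense (⋂ j, ⋃ N, interior (A j N)) := by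
        refine dense_iInter_of_isOpen_nat
          (fun j => isOpen_iUnion fun N => isOpen_interior) (fun j => ?_)
        exact dense_iUnion_interior_of_closed (hAclosed j) (hAcover j)
      obtain ⟨a₀, ha₀⟩ := hdense.nonempty
      refine ⟨a₀, fun ε hε => ?_⟩
      obtain ⟨j, hj⟩ := exists_nat_one_div_lt hε
      obtain ⟨N, hN⟩ := mem_iUnion.1 (mem_iInter.1 ha₀ j)
      refine ⟨N, interior (A j N), isOpen_interior, hN, fun a ha k hk l hl => ?_⟩
      exact le_trans ((interior_subset ha) k hk l hl) hj.le
    obtain ⟨a₀, ha₀⟩ := hstar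
    obtain ⟨h', hh'E, hh'gp⟩ := hL5 gp hgpE
    set z₀ : X := h' a₀.1 with hz₀def
    have hz₀Y : z₀ ∈ Y := hEY h' hh'E a₀.1 a₀.2
    have hgpz₀ : gp z₀ = a₀.1 := by
      have h1 : h' (gp z₀) = h' a₀.1 := congrFun hh'gp (h' a₀.1)
      exact hinj h' hh'E h1
    have hbound : ∀ ε > (0:ℝ), dist z₀ (fp a₀.1) ≤ ε := by
      intro ε hε
      obtain ⟨N, U, hUopen, ha₀U, hU⟩ := ha₀ ε hε
      have hcY : ∀ k, hseq k z₀ ∈ Y := fun k => hhsY k z₀ hz₀Y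
      have hctend : Tendsto (fun k => hseq k z₀) atTop (𝓝 a₀.1) := by
        have ht := hhconv z₀ hz₀Y
        rwa [hgpz₀] at ht
      set c : ℕ → ↥Y := fun k => ⟨hseq k z₀, hcY k⟩ with hc
      have hctend' : Tendsto c atTop (𝓝 a₀) := by
        rw [tendsto_subtype_rng]; exact hctend
      have hev : ∀ᶠ k in atTop, c k ∈ U := hctend' (hUopen.mem_nhds ha₀U)
      have hexact : ∀ k, gseq k (hseq k z₀) = z₀ := fun k =>
        Function.LeftInverse.iterate f.apply_symm_apply (nseq k) z₀
      have hstep1 : ∀ l ≥ N, dist z₀ (gseq l a₀.1) ≤ ε := by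
        intro l hl
        have hev2 : ∀ᶠ k in atTop,
            dist z₀ (gseq l a₀.1) ≤ ε + dist (gseq l (hseq k z₀)) (gseq l a₀.1) := by
          filter_upwards [hev, eventually_ge_atTop N] with k hkU hkN
          calc dist z₀ (gseq l a₀.1) = dist (gseq k (hseq k z₀)) (gseq l a₀.1) := by
                rw [hexact k]
          _ ≤ dist (gseq k (hseq k z₀)) (gseq l (hseq k z₀))
                + dist (gseq l (hseq k z₀)) (gseq l a₀.1) := dist_triangle _ _ _
          _ ≤ ε + dist (gseq l (hseq k z₀)) (gseq l a₀.1) :=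
                add_le_add_left (hU (c k) hkU k hkN l hl) _
        have h1 : Tendsto (fun k => gseq l (hseq k z₀)) atTop (𝓝 (gseq l a₀.1)) :=
          ((f.continuous.iterate (nseq l)).tendsto a₀.1).comp hctend
        have hlim : Tendsto (fun k => ε + dist (gseq l (hseq k z₀)) (gseq l a₀.1))
            atTop (𝓝 (ε + 0)) :=
          tendsto_const_nhds.add
            (by simpa using h1.dist (tendsto_const_nhds (x := gseq l a₀.1)))
        have hle := ge_of_tendsto hlim hev2
        simpa using hle
      have hlim2 : Tendsto (fun l => dist z₀ (gseq l a₀.1)) atTop (𝓝 (dist z₀ (fp a₀.1))) :=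
        tendsto_const_nhds.dist (hgconv a₀.1 a₀.2)
      exact le_of_tendsto hlim2 (eventually_atTop.2 ⟨N, hstep1⟩)
    have hd0 : dist z₀ (fp a₀.1) ≤ 0 := by
      by_contra hpos
      push_neg at hpos
      have hb := hbound (dist z₀ (fp a₀.1) / 2) (by linarith)
      linarith
    have hfix : fp (gp z₀) = z₀ := by
      rw [hgpz₀]
      have he : dist z₀ (fp a₀.1) = 0 := le_antisymm hd0 dist_nonneg
      exact (eq_of_dist_eq_zero he).symm
    -- globalization: fp ∘ gp fixes all of Y, in particular x
    obtain ⟨h, hhE, hhz⟩ := hmin z₀ hz₀Y x hxY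
    have hwE : fp ∘ gp ∈ E := hcompE fp hfpE gp hgpE
    have hc := congrFun (habel (fp ∘ gp) hwE h hhE) z₀
    have hfin : fp (gp x) = h (fp (gp z₀)) := by
      rw [← hhz]
      exact hc
    rw [hfin, hfix, hhz]
  have h1 : fp ∘ gp = id := funext main
  have h2 : gp ∘ fp = id := by
    rw [habel gp hgpE fp hfpE]; exact h1
  exact ⟨h2, h1⟩
end

section
/- Let X be a compact metric countable space and f : X → X a homeomorphism. Then (X,f) is distal if, and only if, E(X,f,ℤ) is a group under composition; that is, for every g ∈ E(X,f,ℤ) there exists h ∈ E(X,f,ℤ) with g ∘ h = h ∘ g = id_X. -/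
open Filter Topology

set_option linter.unusedSectionVars false

section Aux

variable {X : Type*} [MetricSpace X] [CompactSpace X] [Nonempty X] (f : X ≃ₜ X)

private lemma ellis_cont (n : ℤ) : Continuous ⇑(f.toEquiv ^ n) := by
  induction n using Int.induction_on with
  | zero => simpa using continuous_id
  | succ n ih =>
      have h1 : f.toEquiv ^ ((n : ℤ) + 1) = f.toEquiv ^ (n : ℤ) * f.toEquiv :=
        zpow_add_one _ _
      have h2 : ⇑(f.toEquiv ^ (n:ℤ) * f.toEquiv) = ⇑(f.toEquiv ^ (n:ℤ)) ∘ ⇑f.toEquiv := rfl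
      rw [h1, h2]
      exact ih.comp f.continuous
  | pred n ih =>
      have h1 : f.toEquiv ^ (-(n : ℤ) - 1) = f.toEquiv ^ (-(n:ℤ)) * (f.toEquiv)⁻¹ := by
        rw [zpow_sub_one]
      have h2 : ⇑(f.toEquiv ^ (-(n:ℤ)) * (f.toEquiv)⁻¹) =
          ⇑(f.toEquiv ^ (-(n:ℤ))) ∘ ⇑f.symm := rfl
      rw [h1, h2]
      exact ih.comp f.symm.continuous

private lemma ellis_comp (n m : ℤ) :
    ⇑(f.toEquiv ^ n) ∘ ⇑(f.toEquiv ^ m) = ⇑(f.toEquiv ^ (n + m)) := by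
  rw [zpow_add]
  rfl

private lemma ellis_closure_comp {g h : X → X}
    (hg : g ∈ closure {g : X → X | ∃ n : ℤ, g = ⇑(f.toEquiv ^ n)})
    (hh : h ∈ closure {g : X → X | ∃ n : ℤ, g = ⇑(f.toEquiv ^ n)}) :
    g ∘ h ∈ closure {g : X → X | ∃ n : ℤ, g = ⇑(f.toEquiv ^ n)} := by
  set S : Set (X → X) := {g : X → X | ∃ n : ℤ, g = ⇑(f.toEquiv ^ n)} with hS
  have step1 : ∀ h ∈ closure S, ∀ n : ℤ, ⇑(f.toEquiv ^ n) ∘ h ∈ closure S := by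
    intro h hh n
    have hc : Continuous (fun u : X → X => ⇑(f.toEquiv ^ n) ∘ u) :=
      continuous_pi fun x => (ellis_cont f n).comp (continuous_apply x)
    have hmaps : Set.MapsTo (fun u : X → X => ⇑(f.toEquiv ^ n) ∘ u) S (closure S) := by
      rintro u ⟨m, rfl⟩
      exact subset_closure ⟨n + m, ellis_comp f n m⟩
    have := hmaps.closure hc
    rw [closure_closure] at this
    exact this hh
  have hc : Continuous (fun u : X → X => u ∘ h) :=
    continuous_pi fun x => continuous_apply (h x)
  have hmaps : Set.MapsTo (fun u : X → X => u ∘ h) S (closure S) := by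
    rintro u ⟨m, rfl⟩
    exact step1 h hh m
  have := hmaps.closure hc
  rw [closure_closure] at this
  exact this hg

end Aux

/-- (Ellis) Let `X` be a compact metric countable space and `f : X → X` a homeomorphism.
Then `(X,f)` is distal iff `E(X,f,ℤ)` is a group under composition: every
`g ∈ E(X,f,ℤ)` has an `h ∈ E(X,f,ℤ)` with `g ∘ h = h ∘ g = id`. -/
theorem distal_iff_ellis_group
    {X : Type*} [MetricSpace X] [CompactSpace X] [Countable X] [Nonempty X]
    (f : X ≃ₜ X) :
    (∀ x y : X, x ≠ y →
        ∃ ε > (0:ℝ), ∀ n : ℤ, ε ≤ dist ((f.toEquiv ^ n) x) ((f.toEquiv ^ n) y)) ↔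
      (∀ g ∈ closure {g : X → X | ∃ n : ℤ, g = ⇑(f.toEquiv ^ n)},
        ∃ h ∈ closure {g : X → X | ∃ n : ℤ, g = ⇑(f.toEquiv ^ n)},
          g ∘ h = id ∧ h ∘ g = id) := by
  set S : Set (X → X) := {g : X → X | ∃ n : ℤ, g = ⇑(f.toEquiv ^ n)} with hS
  have hidS : (id : X → X) ∈ S := ⟨0, by simp⟩
  constructor
  · -- distal → group
    intro hd
    have key : ∀ g ∈ closure S, ∃ h ∈ closure S, h ∘ g = id := by
      intro g hg
      letI : Mul (X → X) := ⟨fun a b => a ∘ b⟩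
      letI : Semigroup (X → X) := { mul := fun a b => a ∘ b, mul_assoc := fun _ _ _ => rfl }
      have hcml : ∀ r : X → X, Continuous (· * r) := fun r =>
        continuous_pi fun x => continuous_apply (r x)
      set s : Set (X → X) := (fun u => u ∘ g) '' closure S with hs
      have hsne : s.Nonempty := ⟨id ∘ g, id, subset_closure hidS, rfl⟩
      have hscomp : IsCompact s :=
        (isClosed_closure.isCompact).image (hcml g)
      have hmul : ∀ x ∈ s, ∀ y ∈ s, x * y ∈ s := by
        rintro _ ⟨h1, hh1, rfl⟩ _ ⟨h2, hh2, rfl⟩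
        exact ⟨h1 ∘ (g ∘ h2),
          ellis_closure_comp f hh1 (ellis_closure_comp f hg hh2), rfl⟩
      obtain ⟨u, hus, huu⟩ :=
        exists_idempotent_in_compact_subsemigroup hcml s hsne hscomp hmul
      obtain ⟨h, hh, rfl⟩ := hus
      have huE : h ∘ g ∈ closure S := ellis_closure_comp f hh hg
      -- injectivity of the idempotent from distality
      have uinj : Function.Injective (h ∘ g) := by
        intro a b hab
        by_contra hne
        obtain ⟨ε, hε, hdist⟩ := hd a b hne
        set u := h ∘ g with hu
        have hV : ∃ v ∈ S, dist (v a) (u a) < ε / 2 ∧ dist (v b) (u b) < ε / 2 := by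
          have hopen : IsOpen (((fun v : X → X => v a) ⁻¹' Metric.ball (u a) (ε / 2)) ∩
              ((fun v : X → X => v b) ⁻¹' Metric.ball (u b) (ε / 2))) :=
            (Metric.isOpen_ball.preimage (continuous_apply a)).inter
              (Metric.isOpen_ball.preimage (continuous_apply b))
          have humem : u ∈ ((fun v : X → X => v a) ⁻¹' Metric.ball (u a) (ε / 2)) ∩
              ((fun v : X → X => v b) ⁻¹' Metric.ball (u b) (ε / 2)) := by
            constructor <;> simp [Metric.mem_ball, half_pos hε]
          obtain ⟨v, hv1, hv2⟩ := _root_.mem_closure_iff.1 huE _ hopen humem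
          exact ⟨v, hv2, by simpa using hv1.1, by simpa using hv1.2⟩
        obtain ⟨v, ⟨n, rfl⟩, hva, hvb⟩ := hV
        have h4 : dist ((f.toEquiv ^ n) a) ((f.toEquiv ^ n) b) ≤
            dist ((f.toEquiv ^ n) a) (u a) + dist (u a) (u b) +
              dist (u b) ((f.toEquiv ^ n) b) := dist_triangle4 _ _ _ _
        have hab' : dist (u a) (u b) = 0 := by rw [hab, dist_self]
        have h5 : dist (u b) ((f.toEquiv ^ n) b) = dist ((f.toEquiv ^ n) b) (u b) :=
          dist_comm _ _
        linarith [hdist n, hva, hvb]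
      have hid : h ∘ g = id := by
        funext x
        exact uinj (congrFun huu x)
      exact ⟨h, hh, hid⟩
    intro g hg
    obtain ⟨h, hh, hhg⟩ := key g hg
    obtain ⟨k, hk, hkh⟩ := key h hh
    have hgk : g = k := by
      calc g = (k ∘ h) ∘ g := by rw [hkh]; rfl
      _ = k ∘ (h ∘ g) := rfl
      _ = k := by rw [hhg]; rfl
    exact ⟨h, hh, by rw [hgk]; exact hkh, hhg⟩
  · -- group → distal
    intro hgrp x y hxy
    by_contra hc
    push_neg at hc
    choose n hn using fun k : ℕ => hc (1 / ((k : ℝ) + 1)) (by positivity)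
    set φ : ℕ → (X → X) := fun k => ⇑(f.toEquiv ^ n k) with hφ
    set U : Ultrafilter ℕ := Ultrafilter.of atTop with hU
    obtain ⟨g, -, hgle⟩ := isCompact_univ.ultrafilter_le_nhds (U.map φ)
      (by simp)
    have htend : Tendsto φ ↑U (𝓝 g) := hgle
    have hgS : g ∈ closure S :=
      mem_closure_of_tendsto htend (Eventually.of_forall fun k => ⟨n k, rfl⟩)
    have hx : Tendsto (fun k => φ k x) ↑U (𝓝 (g x)) := tendsto_pi_nhds.1 htend x
    have hy : Tendsto (fun k => φ k y) ↑U (𝓝 (g y)) := tendsto_pi_nhds.1 htend y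
    have hdist0 : Tendsto (fun k => dist (φ k x) (φ k y)) ↑U (𝓝 0) := by
      have h1 : Tendsto (fun k : ℕ => dist (φ k x) (φ k y)) atTop (𝓝 0) :=
        squeeze_zero (fun k => dist_nonneg) (fun k => (hn k).le)
          tendsto_one_div_add_atTop_nhds_zero_nat
      exact h1.mono_left (Ultrafilter.of_le _)
    have hgxy : g x = g y := by
      have := tendsto_nhds_unique (hx.dist hy) hdist0
      rwa [dist_eq_zero] at this
    obtain ⟨h, hh, hgh, hhg⟩ := hgrp g hgS
    have ex := congrFun hhg x
    have ey := congrFun hhg y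
    simp only [Function.comp_apply, id_eq] at ex ey
    exact hxy (by rw [← ex, ← ey]; exact congrArg h hgxy)
end

section
/- Let X be a compact metric countable space and f : X → X a distal homeomorphism. Let x ∈ X have minimal period k ≥ 1 and let V_0, V_1, …, V_{k-1} be pairwise disjoint clopen subsets of X such that {x, f(x), …, f^{k-1}(x)} ∩ V_r = {f^r(x)} for every 0 ≤ r ≤ k-1. Then there exists δ > 0 such that for every y ∈ X with d(x,y) < δ and every m ∈ ℕ, f^m(y) ∈ V_r where r is the residue of m modulo k. -/
open Filter Topology

set_option linter.unusedSectionVars false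
set_option linter.deprecated false

namespace DistalAux

variable {X : Type*} [MetricSpace X] [CompactSpace X] [Countable X]

lemma zpow_apply (f : X ≃ₜ X) (n : ℕ) (x : X) :
    (f.toEquiv ^ (n : ℤ)) x = (⇑f)^[n] x := by
  rw [zpow_natCast]
  rfl

/-- forward tail of the orbit -/
def tail (f : X ≃ₜ X) (z : X) (N : ℕ) : Set X :=
  closure ((fun n : ℕ => (⇑f)^[n] z) '' Set.Ici N)

lemma isClosed_tail (f : X ≃ₜ X) (z : X) (N : ℕ) : IsClosed (tail f z N) :=
  isClosed_closure

lemma tail_nonempty (f : X ≃ₜ X) (z : X) (N : ℕ) : (tail f z N).Nonempty :=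
  ⟨(⇑f)^[N] z, subset_closure ⟨N, le_refl N, rfl⟩⟩

lemma tail_antitone (f : X ≃ₜ X) (z : X) : Antitone (tail f z) := by
  intro a b hab
  exact closure_mono (Set.image_mono (Set.Ici_subset_Ici.mpr hab))

lemma image_tail (f : X ≃ₜ X) (z : X) (N : ℕ) :
    ⇑f '' tail f z N = tail f z (N + 1) := by
  have h : ⇑f '' ((fun n : ℕ => (⇑f)^[n] z) '' Set.Ici N)
      = (fun n : ℕ => (⇑f)^[n] z) '' Set.Ici (N + 1) := by
    ext w
    constructor
    · rintro ⟨_, ⟨n, hn, rfl⟩, rfl⟩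
      exact ⟨n + 1, by simp only [Set.mem_Ici] at hn ⊢; omega,
        Function.iterate_succ_apply' (⇑f) n z⟩
    · rintro ⟨n, hn, rfl⟩
      simp only [Set.mem_Ici] at hn
      refine ⟨(⇑f)^[n-1] z, ⟨n - 1, by simp only [Set.mem_Ici]; omega, rfl⟩, ?_⟩
      rw [← Function.iterate_succ_apply' (⇑f) (n-1) z]
      congr 1
      omega
  unfold tail
  rw [f.image_closure, h]

def omega (f : X ≃ₜ X) (z : X) : Set X := ⋂ N, tail f z N

lemma omega_nonempty (f : X ≃ₜ X) (z : X) : (omega f z).Nonempty := by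
  apply IsCompact.nonempty_iInter_of_directed_nonempty_isCompact_isClosed
  · exact (tail_antitone f z).directed_ge
  · exact tail_nonempty f z
  · exact fun N => (isClosed_tail f z N).isCompact
  · exact isClosed_tail f z

lemma isClosed_omega (f : X ≃ₜ X) (z : X) : IsClosed (omega f z) :=
  isClosed_iInter (isClosed_tail f z)

lemma image_omega (f : X ≃ₜ X) (z : X) : ⇑f '' omega f z = omega f z := by
  rw [omega, Set.image_iInter f.bijective]
  simp_rw [image_tail]
  apply le_antisymm
  · exact le_iInf fun N => (iInf_le _ N).trans (tail_antitone f z (Nat.le_succ N))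
  · exact le_iInf fun N => iInf_le _ (N + 1)

lemma omega_subset_tail (f : X ≃ₜ X) (z : X) (N : ℕ) : omega f z ⊆ tail f z N :=
  Set.iInter_subset _ N

lemma iterate_mem_of_inv {f : X ≃ₜ X} {S : Set X} (hinv : ⇑f '' S = S) {z : X}
    (hz : z ∈ S) (n : ℕ) : (⇑f)^[n] z ∈ S := by
  induction n with
  | zero => exact hz
  | succ n ih =>
    rw [Function.iterate_succ_apply']
    rw [← hinv]
    exact ⟨_, ih, rfl⟩

lemma omega_subset {f : X ≃ₜ X} {S : Set X} (hcl : IsClosed S) (hinv : ⇑f '' S = S)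
    {z : X} (hz : z ∈ S) : omega f z ⊆ S := by
  refine (omega_subset_tail f z 0).trans ?_
  rw [tail, ← hcl.closure_eq]
  apply closure_mono
  rintro w ⟨n, _, rfl⟩
  exact iterate_mem_of_inv hinv hz n

lemma exists_minimal (f : X ≃ₜ X) (S : Set X) (hcl : IsClosed S) (hne : S.Nonempty)
    (hinv : ⇑f '' S = S) :
    ∃ M, M ⊆ S ∧ M.Nonempty ∧ IsClosed M ∧ ⇑f '' M = M ∧
      ∀ A, A ⊆ M → A.Nonempty → IsClosed A → ⇑f '' A = A → A = M := by
  set T : Set (Set X) := {A | A ⊆ S ∧ A.Nonempty ∧ IsClosed A ∧ ⇑f '' A = A} with hT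
  have H : ∀ c ⊆ T, IsChain (· ⊆ ·) c → c.Nonempty → ∃ lb ∈ T, ∀ s ∈ c, lb ⊆ s := by
    intro c hcT hchain hcne
    refine ⟨⋂₀ c, ⟨?_, ?_, ?_, ?_⟩, fun s hs => Set.sInter_subset_of_mem hs⟩
    · obtain ⟨s, hs⟩ := hcne
      exact (Set.sInter_subset_of_mem hs).trans (hcT hs).1
    · rw [Set.sInter_eq_iInter]
      haveI : Nonempty c := hcne.to_subtype
      apply IsCompact.nonempty_iInter_of_directed_nonempty_isCompact_isClosed
      · intro a b
        rcases hchain.total a.2 b.2 with h | h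
        · exact ⟨a, le_refl _, h⟩
        · exact ⟨b, h, le_refl _⟩
      · exact fun a => (hcT a.2).2.1
      · exact fun a => (hcT a.2).2.2.1.isCompact
      · exact fun a => (hcT a.2).2.2.1
    · exact isClosed_sInter fun s hs => (hcT hs).2.2.1
    · rw [Set.sInter_eq_iInter, Set.image_iInter f.bijective]
      haveI : Nonempty c := hcne.to_subtype
      exact Set.iInter_congr fun a => (hcT a.2).2.2.2
  obtain ⟨M, _, hM⟩ := zorn_superset_nonempty T H S ⟨subset_rfl, hne, hcl, hinv⟩
  obtain ⟨hMT, hmin⟩ := hM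
  obtain ⟨hMS, hMne, hMcl, hMinv⟩ := hMT
  refine ⟨M, hMS, hMne, hMcl, hMinv, fun A h1 h2 h3 h4 => ?_⟩
  exact le_antisymm h1 (hmin ⟨h1.trans hMS, h2, h3, h4⟩ h1)

lemma exists_isolated (M : Set X) (hcl : IsClosed M) (hne : M.Nonempty) :
    ∃ p ∈ M, ∃ U : Set X, IsOpen U ∧ U ∩ M = {p} := by
  haveI : CompactSpace M := isCompact_iff_compactSpace.mp hcl.isCompact
  haveI : Nonempty M := hne.to_subtype
  obtain ⟨p, hp⟩ := nonempty_interior_of_iUnion_of_closed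
    (f := fun p : M => ({p} : Set M)) (fun p => isClosed_singleton)
    (by ext q; simp)
  have hop : IsOpen ({p} : Set M) := by
    obtain ⟨q, hq⟩ := hp
    have hqp : q ∈ ({p} : Set M) := interior_subset hq
    rw [Set.mem_singleton_iff] at hqp
    have h1 : ({p} : Set M) = interior ({p} : Set M) := by
      apply Set.Subset.antisymm ?_ interior_subset
      intro r hr
      rw [Set.mem_singleton_iff] at hr
      subst hr
      rwa [hqp] at hq
    rw [h1]; exact isOpen_interior
  obtain ⟨U, hU, hUp⟩ := isOpen_induced_iff.mp hop
  refine ⟨p, p.2, U, hU, ?_⟩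
  ext w
  constructor
  · rintro ⟨hwU, hwM⟩
    have : (⟨w, hwM⟩ : M) ∈ (Subtype.val ⁻¹' U : Set M) := hwU
    rw [hUp] at this
    simpa using congrArg Subtype.val this
  · rintro rfl
    refine ⟨?_, p.2⟩
    have : p ∈ (Subtype.val ⁻¹' U : Set M) := by rw [hUp]; rfl
    exact this

lemma exists_periodic_in (f : X ≃ₜ X) (S : Set X) (hcl : IsClosed S) (hne : S.Nonempty)
    (hinv : ⇑f '' S = S) : ∃ p ∈ S, ∃ q, 1 ≤ q ∧ (⇑f)^[q] p = p := by
  obtain ⟨M, hMS, hMne, hMcl, hMinv, hmin⟩ := exists_minimal f S hcl hne hinv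
  obtain ⟨p, hpM, U, hU, hUM⟩ := exists_isolated M hMcl hMne
  have hΩ : omega f p = M :=
    hmin _ (omega_subset hMcl hMinv hpM) (omega_nonempty f p) (isClosed_omega f p)
      (image_omega f p)
  have hp1 : p ∈ tail f p 1 := omega_subset_tail f p 1 (hΩ ▸ hpM)
  have hnon : (U ∩ (fun n : ℕ => (⇑f)^[n] p) '' Set.Ici 1).Nonempty :=
    _root_.mem_closure_iff.mp hp1 U hU
      (by have := Set.eq_singleton_iff_unique_mem.mp hUM; exact this.1.1)
  obtain ⟨w, hwU, n, hn1, rfl⟩ := hnon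
  have hwM : (⇑f)^[n] p ∈ M := iterate_mem_of_inv hMinv hpM n
  have : (⇑f)^[n] p ∈ U ∩ M := ⟨hwU, hwM⟩
  rw [hUM] at this
  exact ⟨p, hMS hpM, n, hn1, this⟩

lemma periodic_of_distal (f : X ≃ₜ X)
    (hdistal : ∀ x y : X, x ≠ y →
      ∃ ε > (0:ℝ), ∀ n : ℤ, ε ≤ dist ((f.toEquiv ^ n) x) ((f.toEquiv ^ n) y))
    (z : X) : ∃ q, 1 ≤ q ∧ (⇑f)^[q] z = z := by
  obtain ⟨p, hpΩ, q, hq1, hpq⟩ := exists_periodic_in f (omega f z) (isClosed_omega f z)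
    (omega_nonempty f z) (image_omega f z)
  -- choose approximating times
  have happrox : ∀ i : ℕ, ∃ n : ℕ, i ≤ n ∧ dist p ((⇑f)^[n] z) < 1 / (i + 1) := by
    intro i
    have hp : p ∈ tail f z i := omega_subset_tail f z i hpΩ
    have hpos : (0:ℝ) < 1 / (i + 1) := by positivity
    obtain ⟨w, ⟨n, hn, rfl⟩, hd⟩ := Metric.mem_closure_iff.mp hp _ hpos
    exact ⟨n, hn, hd⟩
  choose n hn hdist using happrox
  -- pigeonhole on residues mod q
  haveI : NeZero q := ⟨by omega⟩
  obtain ⟨c, hc⟩ := Finite.exists_infinite_fiber (fun i => (⟨n i % q, Nat.mod_lt _ (by omega)⟩ : Fin q))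
  rw [Set.infinite_coe_iff] at hc
  -- claim f^[c] z = p  (c := c.val)
  have key : (⇑f)^[(c : ℕ)] z = p := by
    by_contra hne
    obtain ⟨ε, hε, hd⟩ := hdistal _ _ (Ne.symm hne)
    obtain ⟨M, hM⟩ := exists_nat_gt (1 / ε)
    obtain ⟨i, hi, hiM⟩ := hc.exists_gt (max M (c : ℕ))
    have hres : n i % q = (c : ℕ) := congrArg Fin.val hi
    have hni : (c : ℕ) ≤ n i := le_trans (le_trans (le_max_right _ _) (le_of_lt hiM)) (hn i)
    set m : ℕ := n i - (c : ℕ) with hm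
    have hqm : q ∣ m := by
      refine (Nat.modEq_iff_dvd' hni).mp ?_
      show (c : ℕ) % q = n i % q
      rw [hres, Nat.mod_eq_of_lt c.2]
    obtain ⟨t, ht⟩ := hqm
    have h1 : (f.toEquiv ^ (m : ℤ)) p = p := by
      rw [zpow_apply, ht, Function.iterate_mul]
      exact Function.iterate_fixed hpq t
    have h2 : (f.toEquiv ^ (m : ℤ)) ((⇑f)^[(c:ℕ)] z) = (⇑f)^[n i] z := by
      rw [zpow_apply, ← Function.iterate_add_apply]
      congr 1
      omega
    have := hd (m : ℤ)
    rw [h1, h2] at this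
    have hlt : dist p ((⇑f)^[n i] z) < ε := by
      refine lt_of_lt_of_le (hdist i) ?_
      rw [div_le_iff₀ (by positivity)]
      rw [div_lt_iff₀ hε] at hM
      calc (1:ℝ) ≤ ε * (M+1) := by nlinarith
        _ ≤ ε * (i+1) := by
            have : (M:ℝ) ≤ i := by exact_mod_cast le_of_lt (lt_of_le_of_lt (le_max_left _ _) hiM)
            nlinarith
    linarith
  -- conclude
  refine ⟨q, hq1, ?_⟩
  have hcomm : (⇑f)^[(c:ℕ)] ((⇑f)^[q] z) = (⇑f)^[(c:ℕ)] z := by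
    rw [← Function.iterate_add_apply, Nat.add_comm, Function.iterate_add_apply, key, hpq, ← key]
  exact (f.toEquiv.injective.iterate (c:ℕ)) hcomm

end DistalAux

/-- Let `X` be a compact metric countable space, `f : X → X` a distal homeomorphism,
`x ∈ X` of minimal period `k ≥ 1`, and `V_0, …, V_{k-1}` pairwise disjoint clopen sets
with `{x, f(x), …, f^{k-1}(x)} ∩ V_r = {f^r(x)}`. Then there is `δ > 0` such that for
every `y` with `d(x,y) < δ` and every `m ∈ ℕ`, `f^m(y) ∈ V_{m mod k}`. -/
theorem distal_local_periodic_behavior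
    {X : Type*} [MetricSpace X] [CompactSpace X] [Countable X] [Nonempty X]
    (f : X ≃ₜ X)
    (hdistal : ∀ x y : X, x ≠ y →
      ∃ ε > (0:ℝ), ∀ n : ℤ, ε ≤ dist ((f.toEquiv ^ n) x) ((f.toEquiv ^ n) y))
    (x : X) (k : ℕ) (hk : 1 ≤ k) (hxk : (⇑f)^[k] x = x)
    (hmin : ∀ m : ℕ, 1 ≤ m → m < k → (⇑f)^[m] x ≠ x)
    (V : Fin k → Set X)
    (hdisj : ∀ r s : Fin k, r ≠ s → Disjoint (V r) (V s))
    (hclopen : ∀ r : Fin k, IsClopen (V r))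
    (horbit : ∀ r : Fin k,
      ((fun i : ℕ => (⇑f)^[i] x) '' Set.Iio k) ∩ V r = {(⇑f)^[(r : ℕ)] x}) :
    ∃ δ > (0:ℝ), ∀ y : X, dist x y < δ →
      ∀ m : ℕ, (⇑f)^[m] y ∈ V ⟨m % k, Nat.mod_lt m hk⟩ := by
  classical
  set W : ℕ → Set X := fun m => V ⟨m % k, Nat.mod_lt m hk⟩ with hWdef
  have hWclosed : ∀ m, IsClosed (W m) := fun m => (hclopen _).1
  -- x belongs to all the constraint sets
  have hVmem : ∀ r : Fin k, (⇑f)^[(r : ℕ)] x ∈ V r := by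
    intro r
    have h := horbit r
    have : (⇑f)^[(r : ℕ)] x ∈ ({(⇑f)^[(r : ℕ)] x} : Set X) := rfl
    rw [← h] at this
    exact this.2
  have hxV : ∀ m : ℕ, (⇑f)^[m] x ∈ W m := by
    intro m
    have h1 : (⇑f)^[m] x = (⇑f)^[m % k] x := by
      conv_lhs => rw [← Nat.mod_add_div m k]
      rw [Function.iterate_add_apply, Function.iterate_mul,
        Function.iterate_fixed hxk (m / k)]
    rw [hWdef]
    simpa [h1] using hVmem ⟨m % k, Nat.mod_lt m hk⟩
  -- main claim: some finite set of constraints implies all of them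
  have claim : ∃ N : ℕ, ∀ y : X, (∀ m ≤ N, (⇑f)^[m] y ∈ W m) → ∀ m, (⇑f)^[m] y ∈ W m := by
    by_contra hcon
    push_neg at hcon
    choose y hy hbad using hcon
    have hex : ∀ N : ℕ, ∃ m, (⇑f)^[m] (y N) ∉ W m := hbad
    set m0 : ℕ → ℕ := fun N => Nat.find (hex N) with hm0
    have hbad0 : ∀ N, (⇑f)^[m0 N] (y N) ∉ W (m0 N) := fun N => Nat.find_spec (hex N)
    have hmin0 : ∀ N j, j < m0 N → (⇑f)^[j] (y N) ∈ W j := by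
      intro N j hj
      have := Nat.find_min (hex N) hj
      exact not_not.mp this
    have hgt : ∀ N, N < m0 N := by
      intro N
      by_contra h
      push_neg at h
      exact hbad0 N (hy N (m0 N) h)
    -- fix a residue class occurring infinitely often
    obtain ⟨r, hr⟩ := Finite.exists_infinite_fiber
      (fun N => (⟨m0 N % k, Nat.mod_lt _ hk⟩ : Fin k))
    rw [Set.infinite_coe_iff] at hr
    set F : Set ℕ := (fun N => (⟨m0 N % k, Nat.mod_lt _ hk⟩ : Fin k)) ⁻¹' {r} with hF
    have hFres : ∀ N ∈ F, m0 N % k = (r : ℕ) := by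
      intro N hN
      exact congrArg Fin.val hN
    set zz : ℕ → X := fun N => (⇑f)^[m0 N] (y N) with hzz
    -- the shifted residues
    set s : ℕ → ℕ := fun j => ((r : ℕ) + j * k - j) % k with hs
    have hmodsub : ∀ j N, N ∈ F → j ≤ m0 N → (m0 N - j) % k = s j := by
      intro j N hNF hj
      have hjk : j ≤ j * k := Nat.le_mul_of_pos_right j (by omega)
      have h2 : m0 N - j + j = m0 N := Nat.sub_add_cancel hj
      have h3 : (r : ℕ) + j * k - j + j = (r : ℕ) + j * k := by omega
      have hmm : (m0 N - j) ≡ ((r : ℕ) + j * k - j) [MOD k] := by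
        have hadd : (m0 N - j) + j ≡ ((r : ℕ) + j * k - j) + j [MOD k] := by
          rw [h2, h3]
          show m0 N % k = ((r : ℕ) + j * k) % k
          rw [Nat.add_mul_mod_self_right, hFres N hNF, Nat.mod_eq_of_lt r.isLt]
        exact hadd.add_right_cancel' j
      exact hmm
    -- constraint sets
    set C : ℕ → Set X := fun j => {w | (⇑f.symm)^[j] w ∈ V ⟨s j, Nat.mod_lt _ hk⟩} with hC
    have hCclosed : ∀ j, IsClosed (C j) :=
      fun j => IsClosed.preimage (f.symm.continuous.iterate j) ((hclopen _).1)
    -- the limit-point sets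
    set D : ℕ → Set X := fun J => closure (zz '' {N | N ∈ F ∧ J ≤ N}) with hD
    have hDne : ∀ J, (D J).Nonempty := by
      intro J
      obtain ⟨N, hNF, hNJ⟩ := hr.exists_gt J
      exact ⟨zz N, subset_closure ⟨N, ⟨hNF, le_of_lt hNJ⟩, rfl⟩⟩
    have hDanti : Antitone D := by
      intro a b hab
      apply closure_mono
      apply Set.image_mono
      intro N hN
      exact ⟨hN.1, le_trans hab hN.2⟩
    have hzex : (⋂ J, D J).Nonempty := by
      apply IsCompact.nonempty_iInter_of_directed_nonempty_isCompact_isClosed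
      · exact hDanti.directed_ge
      · exact hDne
      · exact fun J => isClosed_closure.isCompact
      · exact fun J => isClosed_closure
    obtain ⟨z, hz⟩ := hzex
    have hzD : ∀ J, z ∈ D J := fun J => Set.mem_iInter.mp hz J
    -- z is outside V r
    have hzout : z ∉ V r := by
      have hsub : D 0 ⊆ (V r)ᶜ := by
        rw [hD]
        rw [← ((hclopen r).2.isClosed_compl).closure_eq]
        apply closure_mono
        rintro w ⟨N, ⟨hNF, _⟩, rfl⟩
        intro hmem
        apply hbad0 N
        have : W (m0 N) = V r := by
          show V ⟨m0 N % k, Nat.mod_lt _ hk⟩ = V r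
          rw [show (⟨m0 N % k, Nat.mod_lt _ hk⟩ : Fin k) = r from by
            rw [Fin.ext_iff]; exact hFres N hNF]
        rw [this]
        exact hmem
      exact hsub (hzD 0)
    -- z satisfies all backward constraints
    have hzin : ∀ j : ℕ, 1 ≤ j → z ∈ C j := by
      intro j hj
      have hsub : D j ⊆ C j := by
        rw [hD, ← (hCclosed j).closure_eq]
        apply closure_mono
        rintro w ⟨N, ⟨hNF, hNj⟩, rfl⟩
        have hjm : j ≤ m0 N := le_trans hNj (le_of_lt (hgt N))
        have heq : (⇑f.symm)^[j] (zz N) = (⇑f)^[m0 N - j] (y N) := by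
          rw [hzz]
          show (⇑f.symm)^[j] ((⇑f)^[m0 N] (y N)) = (⇑f)^[m0 N - j] (y N)
          conv_lhs => rw [show m0 N = j + (m0 N - j) from by omega,
            Function.iterate_add_apply]
          exact Function.LeftInverse.iterate f.symm_apply_apply j _
        show (⇑f.symm)^[j] (zz N) ∈ V ⟨s j, Nat.mod_lt _ hk⟩
        rw [heq]
        have hmem := hmin0 N (m0 N - j) (by omega)
        have : W (m0 N - j) = V ⟨s j, Nat.mod_lt _ hk⟩ := by
          show V ⟨(m0 N - j) % k, Nat.mod_lt _ hk⟩ = V ⟨s j, Nat.mod_lt _ hk⟩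
          rw [show (⟨(m0 N - j) % k, Nat.mod_lt _ hk⟩ : Fin k)
              = (⟨s j, Nat.mod_lt _ hk⟩ : Fin k) from by
            rw [Fin.ext_iff]; exact hmodsub j N hNF hjm]
        rw [← this]
        exact hmem
      exact hsub (hzD j)
    -- z is periodic
    obtain ⟨q, hq1, hqz⟩ := DistalAux.periodic_of_distal f hdistal z
    -- contradiction at j = q * k
    have hjqk : z ∈ C (q * k) := hzin (q * k) (Nat.mul_pos hq1 hk)
    have hfix : (⇑f.symm)^[q * k] z = z := by
      have h1 : (⇑f)^[q * k] z = z := by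
        rw [Function.iterate_mul]
        exact Function.iterate_fixed hqz k
      conv_lhs => rw [← h1]
      exact Function.LeftInverse.iterate f.symm_apply_apply (q * k) z
    have hsqk : s (q * k) = (r : ℕ) := by
      rw [hs]
      show ((r : ℕ) + q * k * k - q * k) % k = (r : ℕ)
      have h1 : q * k * (k - 1) + q * k = q * k * k := by
        have : (k - 1) + 1 = k := by omega
        calc q * k * (k - 1) + q * k = q * k * ((k - 1) + 1) := by ring
          _ = q * k * k := by rw [this]
      have h2 : (r : ℕ) + q * k * k - q * k = (r : ℕ) + q * k * (k - 1) := by omega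
      rw [h2]
      have h3 : q * k * (k - 1) = (q * (k - 1)) * k := by ring
      rw [h3, Nat.add_mul_mod_self_right]
      exact Nat.mod_eq_of_lt r.isLt
    have hmem : (⇑f.symm)^[q * k] z ∈ V ⟨s (q * k), Nat.mod_lt _ hk⟩ := hjqk
    rw [hfix] at hmem
    rw [show (⟨s (q * k), Nat.mod_lt _ hk⟩ : Fin k) = r from by
      rw [Fin.ext_iff]; exact hsqk] at hmem
    exact hzout hmem
  -- conclude via openness
  obtain ⟨N, hN⟩ := claim
  set A : Set X := ⋂ m ∈ Finset.range (N + 1), (⇑f)^[m] ⁻¹' W m with hA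
  have hAopen : IsOpen A := isOpen_biInter_finset
    (fun m _ => IsOpen.preimage (f.continuous.iterate m) (hclopen _).2)
  have hxA : x ∈ A := by
    rw [hA]
    simp only [Set.mem_iInter, Finset.mem_range]
    intro m _
    exact hxV m
  obtain ⟨δ, hδ, hball⟩ := Metric.isOpen_iff.mp hAopen x hxA
  refine ⟨δ, hδ, fun y hy m => ?_⟩
  have hyA : y ∈ A := hball (by rwa [Metric.mem_ball, dist_comm])
  apply hN y
  intro m' hm'
  have : y ∈ (⇑f)^[m'] ⁻¹' W m' := by
    rw [hA] at hyA
    simp only [Set.mem_iInter, Finset.mem_range] at hyA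
    exact hyA m' (by omega)
  exact this
end

section
/- Let X be a compact metric countable space and f : X → X a homeomorphism. The following are equivalent: (i) (X,f) is equicontinuous; (ii) (X,f) is distal; (iii) E(X,f,ℤ) equals the closure of {f^n : n ∈ ℕ} in X^X with the product topology. -/
open Filter Topology Function

section ZpBasics

variable {Z : Type*} [TopologicalSpace Z]

/-- integer power of a homeomorphism, as a plain function -/
def zp (g : Z ≃ₜ Z) (n : ℤ) : Z → Z := ⇑(g.toEquiv ^ n)

lemma zp_add (g : Z ≃ₜ Z) (m n : ℤ) : zp g (m + n) = zp g m ∘ zp g n := by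
  unfold zp; rw [zpow_add]; rfl

lemma zp_zero (g : Z ≃ₜ Z) : zp g 0 = id := rfl

lemma zp_zero_apply (g : Z ≃ₜ Z) (x : Z) : zp g 0 x = x := rfl

lemma zp_apply_add (g : Z ≃ₜ Z) (m n : ℤ) (x : Z) :
    zp g (m + n) x = zp g m (zp g n x) := by rw [zp_add]; rfl

lemma zp_continuous (g : Z ≃ₜ Z) (n : ℤ) : Continuous (zp g n) := by
  unfold zp
  rcases n with k | k
  · rw [Int.ofNat_eq_coe, zpow_natCast, Equiv.Perm.coe_pow]
    exact g.continuous.iterate k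
  · have e : (Int.negSucc k) = -((k+1 : ℕ) : ℤ) := rfl
    rw [e, zpow_neg, ← inv_zpow, zpow_natCast, Equiv.Perm.coe_pow]
    have : (g.toEquiv)⁻¹ = g.symm.toEquiv := rfl
    rw [this]
    exact g.symm.continuous.iterate (k+1)

lemma zp_injective (g : Z ≃ₜ Z) (n : ℤ) : Function.Injective (zp g n) :=
  (g.toEquiv ^ n).injective

lemma zp_one (g : Z ≃ₜ Z) : zp g 1 = ⇑g := by unfold zp; rw [zpow_one]; rfl

lemma zp_neg_one (g : Z ≃ₜ Z) : zp g (-1) = ⇑g.symm := by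
  unfold zp; rw [zpow_neg_one]; rfl

lemma zp_natCast (g : Z ≃ₜ Z) (k : ℕ) : zp g (k:ℤ) = (⇑g)^[k] := by
  show ⇑(g.toEquiv ^ (k:ℤ)) = _
  rw [zpow_natCast, Equiv.Perm.coe_pow]
  rfl

lemma zp_fix (g : Z ≃ₜ Z) {m : ℤ} {x : Z} (h : zp g m x = x) (j : ℤ) :
    zp g (m * j) x = x := by
  induction j using Int.induction_on with
  | zero => simp [zp_zero]
  | succ k ih => rw [mul_add, mul_one, zp_apply_add, h, ih]
  | pred k ih =>
      have hneg : zp g (-m) x = x := by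
        have := congrArg (zp g (-m)) h
        rw [← zp_apply_add, neg_add_cancel, zp_zero, id_eq] at this
        exact this.symm
      have e : m * (-(k:ℤ) - 1) = m * (-k) + -m := by ring
      rw [e, zp_apply_add, hneg, ih]

lemma zp_prod {X : Type*} [TopologicalSpace X] (f : X ≃ₜ X) (n : ℤ) (p : X × X) :
    zp (f.prodCongr f) n p = (zp f n p.1, zp f n p.2) := by
  induction n using Int.induction_on with
  | zero => rw [zp_zero_apply, zp_zero_apply, zp_zero_apply]
  | succ k ih =>
      rw [show ((k:ℤ)+1) = 1 + (k:ℤ) by ring, zp_apply_add, zp_one, ih,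
        zp_apply_add, zp_one, zp_apply_add, zp_one]
      rfl
  | pred k ih =>
      rw [show (-(k:ℤ)-1) = -1 + -(k:ℤ) by ring, zp_apply_add, zp_neg_one, ih,
        zp_apply_add, zp_neg_one, zp_apply_add, zp_neg_one]
      rfl

/-- the set of powers of `g` with exponents in `T` -/
def PS (g : Z ≃ₜ Z) (T : Set ℤ) : Set (Z → Z) := {h | ∃ n ∈ T, h = zp g n}

lemma comp_mem_closure (g : Z ≃ₜ Z) {T : Set ℤ} (hT : ∀ m ∈ T, ∀ n ∈ T, m + n ∈ T)
    {p q : Z → Z} (hp : p ∈ closure (PS g T)) (hq : q ∈ closure (PS g T)) :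
    p ∘ q ∈ closure (PS g T) := by
  have step1 : ∀ n ∈ T, zp g n ∘ q ∈ closure (PS g T) := by
    intro n hn
    have hΦ : Continuous (fun h : Z → Z => zp g n ∘ h) :=
      continuous_pi fun x => (zp_continuous g n).comp (continuous_apply x)
    have hmaps : Set.MapsTo (fun h : Z → Z => zp g n ∘ h) (PS g T) (PS g T) := by
      rintro h ⟨k, hk, rfl⟩
      exact ⟨n + k, hT n hn k hk, (zp_add g n k).symm⟩
    exact map_mem_closure hΦ hq hmaps
  have hΨ : Continuous (fun h : Z → Z => h ∘ q) :=
    continuous_pi fun x => continuous_apply (q x)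
  have hmaps : Set.MapsTo (fun h : Z → Z => h ∘ q) (PS g T) (closure (PS g T)) := by
    rintro h ⟨k, hk, rfl⟩
    exact step1 k hk
  have := map_mem_closure hΨ hp hmaps
  rwa [closure_closure] at this

lemma exists_idem_ps [CompactSpace Z] [T2Space Z] (g : Z ≃ₜ Z) {T : Set ℤ}
    (hT : ∀ m ∈ T, ∀ n ∈ T, m + n ∈ T) (hne : T.Nonempty) :
    ∃ u ∈ closure (PS g T), u ∘ u = u := by
  obtain ⟨n0, hn0⟩ := hne
  haveI : Nonempty (closure (PS g T)) :=
    ⟨⟨zp g n0, subset_closure ⟨n0, hn0, rfl⟩⟩⟩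
  letI : Semigroup (closure (PS g T)) :=
    { mul := fun a b => ⟨a.1 ∘ b.1, comp_mem_closure g hT a.2 b.2⟩
      mul_assoc := fun a b c => Subtype.ext rfl }
  haveI : CompactSpace (closure (PS g T)) :=
    isCompact_iff_compactSpace.mp (isClosed_closure.isCompact)
  have hcont : ∀ r : (closure (PS g T)), Continuous (· * r) := by
    intro r
    exact Continuous.subtype_mk
      ((continuous_pi fun x => continuous_apply (r.1 x)).comp continuous_subtype_val) _
  obtain ⟨u, hu⟩ := exists_idempotent_of_compact_t2_of_continuous_mul_left hcont
  exact ⟨u.1, u.2, congrArg Subtype.val hu⟩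

end ZpBasics

lemma idem_eq_id {Z : Type*} [MetricSpace Z] (g : Z ≃ₜ Z)
    (hd : ∀ x y : Z, x ≠ y → ∃ ε > (0:ℝ), ∀ n : ℤ, ε ≤ dist (zp g n x) (zp g n y))
    {T : Set ℤ} {u : Z → Z} (hu : u ∈ closure (PS g T)) (huu : u ∘ u = u) :
    u = id := by
  funext x
  by_contra hx
  set y := u x with hy_def
  have hyx : x ≠ y := fun h => hx h.symm
  have hy : u y = y := congrFun huu x
  obtain ⟨ε, hε, hdist⟩ := hd x y hyx
  have hV : IsOpen {h : Z → Z | dist (h x) y < ε/2 ∧ dist (h y) y < ε/2} := by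
    apply IsOpen.inter
    · exact isOpen_lt (Continuous.dist (continuous_apply x) continuous_const) continuous_const
    · exact isOpen_lt (Continuous.dist (continuous_apply y) continuous_const) continuous_const
  have huV : u ∈ {h : Z → Z | dist (h x) y < ε/2 ∧ dist (h y) y < ε/2} := by
    constructor <;> simp [← hy_def, hy, dist_self]; all_goals positivity
  obtain ⟨h, ⟨h1, h2⟩, k, hk, rfl⟩ := (_root_.mem_closure_iff.mp hu) _ hV huV
  have := hdist k
  have trig : dist (zp g k x) (zp g k y) ≤ dist (zp g k x) y + dist (zp g k y) y := by
    rw [dist_comm (zp g k y) y]; exact dist_triangle _ _ _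
  linarith

lemma id_mem_closure_ps {Z : Type*} [MetricSpace Z] [CompactSpace Z] (g : Z ≃ₜ Z)
    (hd : ∀ x y : Z, x ≠ y → ∃ ε > (0:ℝ), ∀ n : ℤ, ε ≤ dist (zp g n x) (zp g n y))
    (N : ℤ) (hN : 1 ≤ N) :
    id ∈ closure (PS g {k : ℤ | N ≤ k}) := by
  have hT : ∀ m ∈ {k : ℤ | N ≤ k}, ∀ n ∈ {k : ℤ | N ≤ k}, m + n ∈ {k : ℤ | N ≤ k} := by
    intro a ha b hb
    simp only [Set.mem_setOf_eq] at *
    omega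
  obtain ⟨u, hu, huu⟩ := exists_idem_ps g hT ⟨N, le_refl N⟩
  rw [← idem_eq_id g hd hu huu]
  exact hu

lemma rec_of_id_mem {Z : Type*} [MetricSpace Z] (g : Z ≃ₜ Z)
    (hid : id ∈ closure (PS g {k : ℤ | 1 ≤ k})) :
    ∀ y : Z, ∀ ρ > (0:ℝ), ∃ k : ℤ, 1 ≤ k ∧ dist (zp g k y) y < ρ := by
  intro y ρ hρ
  have hV : IsOpen {h : Z → Z | dist (h y) y < ρ} :=
    isOpen_lt (Continuous.dist (continuous_apply y) continuous_const) continuous_const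
  have hidV : (id : Z → Z) ∈ {h : Z → Z | dist (h y) y < ρ} := by
    simp only [Set.mem_setOf_eq, id_eq, dist_self]
    exact hρ
  obtain ⟨h, hhV, k, hk, rfl⟩ := (_root_.mem_closure_iff.mp hid) _ hV hidV
  exact ⟨k, hk, hhV⟩

lemma distal_prod {X : Type*} [MetricSpace X] (f : X ≃ₜ X)
    (hd : ∀ x y : X, x ≠ y → ∃ ε > (0:ℝ), ∀ n : ℤ, ε ≤ dist (zp f n x) (zp f n y)) :
    ∀ p q : X × X, p ≠ q → ∃ ε > (0:ℝ), ∀ n : ℤ,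
      ε ≤ dist (zp (f.prodCongr f) n p) (zp (f.prodCongr f) n q) := by
  intro p q hpq
  by_cases h1 : p.1 = q.1
  · have h2 : p.2 ≠ q.2 := fun h => hpq (Prod.ext h1 h)
    obtain ⟨ε, hε, hdd⟩ := hd p.2 q.2 h2
    refine ⟨ε, hε, fun n => ?_⟩
    rw [zp_prod, zp_prod, Prod.dist_eq]
    exact le_trans (hdd n) (le_max_right _ _)
  · obtain ⟨ε, hε, hdd⟩ := hd p.1 q.1 h1
    refine ⟨ε, hε, fun n => ?_⟩
    rw [zp_prod, zp_prod, Prod.dist_eq]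
    exact le_trans (hdd n) (le_max_left _ _)

section CountableCompact

variable {Z : Type*} [MetricSpace Z] [CompactSpace Z] [Countable Z]

lemma exists_isolated {Y : Set Z} (hYc : IsClosed Y) (hY : Y.Nonempty) :
    ∃ y ∈ Y, ∃ ρ > (0:ℝ), ∀ z ∈ Y, dist z y < ρ → z = y := by
  haveI : CompactSpace Y := isCompact_iff_compactSpace.mp hYc.isCompact
  haveI : Nonempty Y := hY.to_subtype
  have hcover : (⋃ y : Y, ({y} : Set Y)) = Set.univ := by ext w; simp
  obtain ⟨y, hy⟩ := nonempty_interior_of_iUnion_of_closed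
    (fun y : Y => isClosed_singleton) hcover
  obtain ⟨w, hw⟩ := hy
  have hw2 : w ∈ ({y} : Set Y) := interior_subset hw
  rw [Set.mem_singleton_iff] at hw2
  subst hw2
  have hnh : ({w} : Set Y) ∈ 𝓝 w := mem_interior_iff_mem_nhds.mp hw
  obtain ⟨ρ, hρ, hsub⟩ := Metric.mem_nhds_iff.mp hnh
  refine ⟨w.1, w.2, ρ, hρ, ?_⟩
  intro z hz hlt
  have : (⟨z, hz⟩ : Y) ∈ Metric.ball w ρ := by
    rw [Metric.mem_ball, Subtype.dist_eq]
    exact hlt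
  have := hsub this
  simpa [Subtype.ext_iff] using this

lemma periodic_of_rec (g : Z ≃ₜ Z)
    (hrec : ∀ y : Z, ∀ ρ > (0:ℝ), ∃ k : ℤ, 1 ≤ k ∧ dist (zp g k y) y < ρ) (x : Z) :
    ∃ m : ℤ, 1 ≤ m ∧ zp g m x = x := by
  set O : Set Z := {z | ∃ n : ℤ, z = zp g n x} with hO
  have hxO : x ∈ O := ⟨0, (zp_zero_apply g x).symm⟩
  obtain ⟨y, hyY, ρ, hρ, hiso⟩ := exists_isolated isClosed_closure ⟨x, subset_closure hxO⟩
  obtain ⟨b, hbO, hby⟩ := Metric.mem_closure_iff.mp hyY ρ hρ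
  have hb : b = y := hiso b (subset_closure hbO) (by rwa [dist_comm] at hby)
  obtain ⟨m, rfl⟩ := hbO
  obtain ⟨k, hk1, hkd⟩ := hrec y ρ hρ
  have hkY : zp g k y ∈ O := by
    rw [← hb]
    exact ⟨k + m, (zp_apply_add g k m x).symm⟩
  have hky : zp g k y = y := hiso _ (subset_closure hkY) hkd
  refine ⟨k, hk1, ?_⟩
  have hxy : x = zp g (-m) y := by
    rw [← hb, ← zp_apply_add, neg_add_cancel, zp_zero_apply]
  rw [hxy, ← zp_apply_add, add_comm k (-m), zp_apply_add, hky]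

omit [CompactSpace Z] [Countable Z] in
lemma distal_of_pp (g : Z ≃ₜ Z)
    (hpp : ∀ z : Z, ∃ m : ℤ, 1 ≤ m ∧ zp g m z = z) :
    ∀ x y : Z, x ≠ y → ∃ ε > (0:ℝ), ∀ n : ℤ, ε ≤ dist (zp g n x) (zp g n y) := by
  intro x y hxy
  obtain ⟨m, hm1, hmx⟩ := hpp x
  obtain ⟨l, hl1, hly⟩ := hpp y
  set M : ℤ := m * l with hM
  have hM1 : 1 ≤ M := by nlinarith
  have hMx : zp g M x = x := zp_fix g hmx l
  have hMy : zp g M y = y := by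
    rw [hM, mul_comm]; exact zp_fix g hly m
  have hMn : M.toNat ≠ 0 := by omega
  set s : Finset ℝ :=
    (Finset.range M.toNat).image (fun k : ℕ => dist (zp g (k:ℤ) x) (zp g (k:ℤ) y)) with hs
  have hsne : s.Nonempty := by
    refine Finset.image_nonempty.mpr ⟨0, ?_⟩
    simpa using Nat.pos_of_ne_zero hMn
  refine ⟨s.min' hsne, ?_, ?_⟩
  · obtain ⟨k, hk, hkeq⟩ := Finset.mem_image.mp (s.min'_mem hsne)
    rw [← hkeq]
    exact dist_pos.mpr fun h => hxy (zp_injective g _ h)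
  · intro n
    set r : ℤ := n % M with hr
    have hr0 : 0 ≤ r := Int.emod_nonneg n (by omega)
    have hrM : r < M := Int.emod_lt_of_pos n (by omega)
    have hnr : n = r + M * (n / M) := by
      rw [hr, add_comm]; exact (Int.mul_ediv_add_emod n M).symm
    have hxr : zp g n x = zp g r x := by
      rw [hnr, zp_apply_add, zp_fix g hMx]
    have hyr : zp g n y = zp g r y := by
      rw [hnr, zp_apply_add, zp_fix g hMy]
    rw [hxr, hyr]
    apply Finset.min'_le
    refine Finset.mem_image.mpr ⟨r.toNat, ?_, ?_⟩
    · rw [Finset.mem_range]; omega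
    · rw [Int.toNat_of_nonneg hr0]

end CountableCompact

section Equicont
variable {X : Type*} [MetricSpace X] [CompactSpace X] [Countable X]

lemma equicont_of_pp (f : X ≃ₜ X)
    (hpp : ∀ p : X × X, ∃ m : ℤ, 1 ≤ m ∧ zp (f.prodCongr f) m p = p) :
    ∀ ε > (0:ℝ), ∃ δ > (0:ℝ), ∀ x y : X, dist x y < δ →
      ∀ n : ℤ, dist (zp f n x) (zp f n y) < ε := by
  by_contra hcon
  push_neg at hcon
  obtain ⟨ε, hε, hbad⟩ := hcon
  have hchoice : ∀ j : ℕ, ∃ x y : X, dist x y < 1/(j+1) ∧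
      ∃ n : ℤ, ε ≤ dist (zp f n x) (zp f n y) := by
    intro j
    obtain ⟨x, y, h1, n, h2⟩ := hbad (1/(j+1)) (by positivity)
    exact ⟨x, y, h1, n, h2⟩
  choose x y hdxy n hn using hchoice
  set F : (X × X) ≃ₜ (X × X) := f.prodCongr f with hF
  set w : ℕ → X × X := fun j => (x j, y j) with hw
  set O : ℕ → Set (X × X) := fun j => {p | ∃ k : ℤ, p = zp F k (w j)} with hO
  set C : ℕ → Set (X × X) := fun J => closure (⋃ j, ⋃ (_ : J ≤ j), O j) with hC
  have hCne : ∀ J, (C J).Nonempty :=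
    fun J => ⟨w J, subset_closure (Set.mem_biUnion (by exact Nat.le.refl) ⟨0, (zp_zero_apply F (w J)).symm⟩)⟩
  have hCdec : ∀ J, C (J+1) ⊆ C J := by
    intro J
    apply closure_mono
    exact Set.biUnion_subset_biUnion_left (fun j hj => Nat.le_of_succ_le hj)
  set Ω : Set (X × X) := ⋂ J, C J with hΩ
  have hΩclosed : IsClosed Ω := isClosed_iInter fun J => isClosed_closure
  have hΩne : Ω.Nonempty := by
    apply IsCompact.nonempty_iInter_of_sequence_nonempty_isCompact_isClosed C hCdec hCne
    · exact isClosed_closure.isCompact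
    · exact fun J => isClosed_closure
  -- invariance
  have hOinv : ∀ t : ℤ, ∀ j, ∀ p ∈ O j, zp F t p ∈ O j := by
    rintro t j p ⟨k, rfl⟩
    exact ⟨t + k, (zp_apply_add F t k (w j)).symm⟩
  have hΩinv : ∀ t : ℤ, ∀ p ∈ Ω, zp F t p ∈ Ω := by
    intro t p hp
    rw [hΩ, Set.mem_iInter] at *
    intro J
    have hmaps : Set.MapsTo (zp F t) (⋃ j, ⋃ (_ : J ≤ j), O j) (⋃ j, ⋃ (_ : J ≤ j), O j) := by
      rintro q hq
      rw [Set.mem_iUnion₂] at *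
      obtain ⟨j, hj, hqj⟩ := hq
      exact ⟨j, hj, hOinv t j q hqj⟩
    exact map_mem_closure (zp_continuous F t) (hp J) hmaps
  -- upper semicontinuity
  set Nh : ℝ → Set (X × X) := fun η => ⋃ q ∈ Ω, Metric.ball q η with hNh
  have hNopen : ∀ η, IsOpen (Nh η) := fun η => isOpen_biUnion fun q _ => Metric.isOpen_ball
  have hNmem : ∀ η p, p ∈ Nh η ↔ ∃ q ∈ Ω, dist p q < η := by
    intro η p
    simp [hNh, Metric.mem_ball]
  have hUSC : ∀ η > (0:ℝ), ∃ J : ℕ, ∀ j, J ≤ j → O j ⊆ Nh η := by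
    intro η hη
    by_contra hus
    push_neg at hus
    set D : ℕ → Set (X × X) := fun J => closure ((⋃ j, ⋃ (_ : J ≤ j), O j) ∩ (Nh η)ᶜ)
      with hD
    have hDne : ∀ J, (D J).Nonempty := by
      intro J
      obtain ⟨j, hj, hnsub⟩ := hus J
      obtain ⟨p, hpO, hpN⟩ := Set.not_subset.mp hnsub
      exact ⟨p, subset_closure ⟨Set.mem_biUnion hj hpO, hpN⟩⟩
    have hDdec : ∀ J, D (J+1) ⊆ D J := fun J => closure_mono
      (Set.inter_subset_inter_left _
        (Set.biUnion_subset_biUnion_left (fun j hj => Nat.le_of_succ_le hj)))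
    obtain ⟨q, hq⟩ := IsCompact.nonempty_iInter_of_sequence_nonempty_isCompact_isClosed
      D hDdec hDne isClosed_closure.isCompact (fun J => isClosed_closure)
    rw [Set.mem_iInter] at hq
    have hqΩ : q ∈ Ω := Set.mem_iInter.mpr fun J =>
      closure_mono Set.inter_subset_left (hq J)
    have hqN : q ∈ (Nh η)ᶜ := by
      have : q ∈ closure ((Nh η)ᶜ) := closure_mono Set.inter_subset_right (hq 0)
      rwa [(hNopen η).isClosed_compl.closure_eq] at this
    exact hqN (Set.mem_biUnion hqΩ (Metric.mem_ball_self hη))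
  -- isolated point of Ω and its period
  obtain ⟨w0, hw0Ω, ρ0, hρ0, hiso0⟩ := exists_isolated hΩclosed hΩne
  obtain ⟨m, hm1, hmw0⟩ := hpp w0
  have hm0 : m ≠ 0 := by omega
  have hred : ∀ t : ℤ, ∃ j : ℕ, j < m.toNat ∧ zp F t w0 = zp F (j:ℤ) w0 := by
    intro t
    have h1 : 0 ≤ t % m := Int.emod_nonneg t hm0
    have h2 : t % m < m := Int.emod_lt_of_pos t (by omega)
    refine ⟨(t % m).toNat, by omega, ?_⟩
    rw [Int.toNat_of_nonneg h1]
    have ht : t = t % m + m * (t / m) := by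
      rw [add_comm]; exact (Int.mul_ediv_add_emod t m).symm
    conv_lhs => rw [ht]
    rw [zp_apply_add, zp_fix F hmw0]
  -- uniform isolation radius for the finite orbit of w0
  have hisoj : ∀ j : ℕ, ∃ ρ > (0:ℝ), ∀ z ∈ Ω,
      dist z (zp F (j:ℤ) w0) < ρ → z = zp F (j:ℤ) w0 := by
    intro j
    have hc : ContinuousAt (zp F (-(j:ℤ))) (zp F (j:ℤ) w0) := (zp_continuous F _).continuousAt
    rw [Metric.continuousAt_iff] at hc
    obtain ⟨ρ, hρ, hball⟩ := hc ρ0 hρ0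
    refine ⟨ρ, hρ, ?_⟩
    intro z hz hdz
    have h1 : dist (zp F (-(j:ℤ)) z) (zp F (-(j:ℤ)) (zp F (j:ℤ) w0)) < ρ0 := hball hdz
    have h2 : zp F (-(j:ℤ)) (zp F (j:ℤ) w0) = w0 := by
      rw [← zp_apply_add, neg_add_cancel, zp_zero_apply]
    rw [h2] at h1
    have h3 : zp F (-(j:ℤ)) z = w0 := hiso0 _ (hΩinv _ _ hz) h1
    have h4 := congrArg (zp F (j:ℤ)) h3
    rw [← zp_apply_add, add_neg_cancel, zp_zero_apply] at h4
    exact h4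
  choose ρf hρf hρiso using hisoj
  have hmtn : m.toNat ≠ 0 := by omega
  set sρ := (Finset.range m.toNat).image ρf with hsρ
  have hsρne : sρ.Nonempty :=
    Finset.image_nonempty.mpr ⟨0, by simpa using Nat.pos_of_ne_zero hmtn⟩
  set ρ : ℝ := min ρ0 (sρ.min' hsρne) with hρdef
  have hρpos : 0 < ρ := by
    rw [hρdef]
    apply lt_min hρ0
    obtain ⟨k, hk, hkeq⟩ := Finset.mem_image.mp (sρ.min'_mem hsρne)
    rw [← hkeq]; exact hρf k
  have hisot : ∀ t : ℤ, ∀ z ∈ Ω, dist z (zp F t w0) < ρ → z = zp F t w0 := by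
    intro t z hz hdz
    obtain ⟨j, hj, hjeq⟩ := hred t
    rw [hjeq] at hdz ⊢
    have hle : ρ ≤ ρf j := le_trans (min_le_right _ _)
      (Finset.min'_le _ _ (Finset.mem_image_of_mem ρf (Finset.mem_range.mpr hj)))
    exact hρiso j z hz (lt_of_lt_of_le hdz hle)
  -- uniform continuity moduli
  have hUC1 : UniformContinuous ⇑F := CompactSpace.uniformContinuous_of_continuous F.continuous
  have hUC2 : UniformContinuous ⇑F.symm :=
    CompactSpace.uniformContinuous_of_continuous F.symm.continuous
  obtain ⟨θ1, hθ1, hcl1⟩ := Metric.uniformContinuous_iff.mp hUC1 (ρ/2) (by positivity)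
  obtain ⟨θ2, hθ2, hcl2⟩ := Metric.uniformContinuous_iff.mp hUC2 (ρ/2) (by positivity)
  -- core construction
  have core : ∀ η : ℝ, 0 < η → η ≤ θ1 → η ≤ θ2 → η ≤ ρ/2 → ∃ (j : ℕ) (c : ℤ),
      dist (x j) (y j) < η ∧ ∀ s : ℤ, dist (zp F s (w j)) (zp F (s + c) w0) < η := by
    intro η hη hηθ1 hηθ2 hηρ
    obtain ⟨J1, hJ1⟩ := hUSC η hη
    obtain ⟨Nn, hNn⟩ := exists_nat_gt (1/η)
    have hw0C : w0 ∈ C (max J1 Nn) := (Set.mem_iInter.mp hw0Ω) _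
    obtain ⟨b, hbU, hbd⟩ := Metric.mem_closure_iff.mp hw0C η hη
    rw [Set.mem_iUnion₂] at hbU
    obtain ⟨j, hjJ, c0, hc0⟩ := hbU
    have hJ1j : J1 ≤ j := le_trans (le_max_left _ _) hjJ
    have hNnj : Nn ≤ j := le_trans (le_max_right _ _) hjJ
    have stepup : ∀ t : ℤ, dist (zp F t b) (zp F t w0) < η →
        dist (zp F (1 + t) b) (zp F (1 + t) w0) < η := by
      intro t ih
      have d1 : dist (F (zp F t b)) (F (zp F t w0)) < ρ/2 :=
        hcl1 (lt_of_lt_of_le ih hηθ1)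
      have e1 : zp F (1 + t) b = F (zp F t b) := by rw [zp_apply_add, zp_one]
      have e2 : zp F (1 + t) w0 = F (zp F t w0) := by rw [zp_apply_add, zp_one]
      have hmem : zp F (1 + t) b ∈ O j := hOinv (1 + t) j b ⟨c0, hc0⟩
      obtain ⟨q, hqΩ, hqd⟩ := (hNmem η _).mp (hJ1 j hJ1j hmem)
      have hq2 : dist q (zp F (1 + t) w0) < ρ := by
        have hA : dist q (zp F (1 + t) b) < η := by rwa [dist_comm] at hqd
        have hB : dist (zp F (1 + t) b) (zp F (1 + t) w0) < ρ/2 := by rw [e1, e2]; exact d1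
        calc dist q (zp F (1 + t) w0)
            ≤ dist q (zp F (1 + t) b) + dist (zp F (1 + t) b) (zp F (1 + t) w0) :=
              dist_triangle _ _ _
          _ < η + ρ/2 := by linarith
          _ ≤ ρ := by linarith
      have hqe : q = zp F (1 + t) w0 := hisot (1 + t) q hqΩ hq2
      rw [← hqe]
      exact hqd
    have stepdown : ∀ t : ℤ, dist (zp F t b) (zp F t w0) < η →
        dist (zp F (-1 + t) b) (zp F (-1 + t) w0) < η := by
      intro t ih
      have d1 : dist (F.symm (zp F t b)) (F.symm (zp F t w0)) < ρ/2 :=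
        hcl2 (lt_of_lt_of_le ih hηθ2)
      have e1 : zp F (-1 + t) b = F.symm (zp F t b) := by rw [zp_apply_add, zp_neg_one]
      have e2 : zp F (-1 + t) w0 = F.symm (zp F t w0) := by rw [zp_apply_add, zp_neg_one]
      have hmem : zp F (-1 + t) b ∈ O j := hOinv (-1 + t) j b ⟨c0, hc0⟩
      obtain ⟨q, hqΩ, hqd⟩ := (hNmem η _).mp (hJ1 j hJ1j hmem)
      have hq2 : dist q (zp F (-1 + t) w0) < ρ := by
        have hA : dist q (zp F (-1 + t) b) < η := by rwa [dist_comm] at hqd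
        have hB : dist (zp F (-1 + t) b) (zp F (-1 + t) w0) < ρ/2 := by rw [e1, e2]; exact d1
        calc dist q (zp F (-1 + t) w0)
            ≤ dist q (zp F (-1 + t) b) + dist (zp F (-1 + t) b) (zp F (-1 + t) w0) :=
              dist_triangle _ _ _
          _ < η + ρ/2 := by linarith
          _ ≤ ρ := by linarith
      have hqe : q = zp F (-1 + t) w0 := hisot (-1 + t) q hqΩ hq2
      rw [← hqe]
      exact hqd
    have prop : ∀ t : ℤ, dist (zp F t b) (zp F t w0) < η := by
      intro t
      induction t using Int.induction_on with
      | zero => rw [zp_zero_apply, zp_zero_apply]; rwa [dist_comm] at hbd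
      | succ k ih =>
          have := stepup k ih
          rwa [show (1:ℤ) + (k:ℤ) = (k:ℤ) + 1 by ring] at this
      | pred k ih =>
          have := stepdown (-k) ih
          rwa [show (-1:ℤ) + -(k:ℤ) = -(k:ℤ) - 1 by ring] at this
    refine ⟨j, -c0, ?_, ?_⟩
    · have h2 : (Nn:ℝ) ≤ (j:ℝ) := by exact_mod_cast hNnj
      have h3 : (1:ℝ)/η < (j:ℝ)+1 := by linarith [hNn]
      have h4 : 1 < ((j:ℝ)+1) * η := (div_lt_iff₀ hη).mp h3
      have h5 : (1:ℝ)/((j:ℝ)+1) < η := by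
        rw [div_lt_iff₀ (by positivity)]
        linarith
      exact lt_trans (hdxy j) h5
    · intro s
      have hps := prop (s + -c0)
      have e : zp F (s + -c0) b = zp F s (w j) := by
        rw [hc0, ← zp_apply_add, show s + -c0 + c0 = s by ring]
      rwa [e] at hps
  -- final contradiction, case split on diagonality of the orbit of w0
  by_cases hdiag : ∀ t : ℤ, (zp F t w0).1 = (zp F t w0).2
  · set η : ℝ := min θ1 (min θ2 (min (ρ/2) (ε/2))) with hηdef
    have hηpos : 0 < η := by
      apply lt_min hθ1; apply lt_min hθ2; apply lt_min <;> positivity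
    obtain ⟨j, c, hsmall, hall⟩ := core η hηpos (min_le_left _ _)
      (le_trans (min_le_right _ _) (min_le_left _ _))
      (le_trans (min_le_right _ _) (le_trans (min_le_right _ _) (min_le_left _ _)))
    have hη2 : η ≤ ε/2 :=
      le_trans (min_le_right _ _) (le_trans (min_le_right _ _) (min_le_right _ _))
    have h := hall (n j)
    rw [zp_prod] at h
    rw [Prod.dist_eq] at h
    have hmax := max_lt_iff.mp h
    obtain ⟨hA, hB⟩ := hmax
    have hPd := hdiag (n j + c)
    have hwj1 : (w j).1 = x j := rfl
    have hwj2 : (w j).2 = y j := rfl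
    rw [hwj1] at hA
    rw [hwj2] at hB
    have htri : dist (zp f (n j) (x j)) (zp f (n j) (y j)) ≤
        dist (zp f (n j) (x j)) (zp F (n j + c) w0).1 +
        dist (zp F (n j + c) w0).1 (zp f (n j) (y j)) := dist_triangle _ _ _
    have hB' : dist (zp F (n j + c) w0).1 (zp f (n j) (y j)) < η := by
      rw [hPd, dist_comm]
      exact hB
    have := hn j
    linarith
  · -- the orbit of w0 is entirely off-diagonal
    push_neg at hdiag
    obtain ⟨t1, ht1⟩ := hdiag
    have alloff : ∀ t : ℤ, (zp F t w0).1 ≠ (zp F t w0).2 := by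
      intro t hEq
      apply ht1
      have hP : zp F t w0 = ((zp F t w0).1, (zp F t w0).1) := by
        exact Prod.ext rfl hEq.symm
      have e : zp F t1 w0 = zp F (t1 - t) (zp F t w0) := by
        rw [← zp_apply_add, show t1 - t + t = t1 by ring]
      rw [e, hP, zp_prod]
    set sμ := (Finset.range m.toNat).image
      (fun k : ℕ => dist (zp F (k:ℤ) w0).1 (zp F (k:ℤ) w0).2) with hsμ
    have hsμne : sμ.Nonempty :=
      Finset.image_nonempty.mpr ⟨0, by simpa using Nat.pos_of_ne_zero hmtn⟩
    set μ : ℝ := sμ.min' hsμne with hμdef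
    have hμpos : 0 < μ := by
      obtain ⟨k, hk, hkeq⟩ := Finset.mem_image.mp (sμ.min'_mem hsμne)
      rw [hμdef, ← hkeq]
      exact dist_pos.mpr (alloff _)
    have hμle : ∀ t : ℤ, μ ≤ dist (zp F t w0).1 (zp F t w0).2 := by
      intro t
      obtain ⟨k, hk, hkeq⟩ := hred t
      rw [hkeq]
      exact Finset.min'_le _ _ (Finset.mem_image_of_mem _ (Finset.mem_range.mpr hk))
    set η : ℝ := min θ1 (min θ2 (min (ρ/2) (μ/4))) with hηdef
    have hηpos : 0 < η := by
      apply lt_min hθ1; apply lt_min hθ2; apply lt_min <;> positivity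
    obtain ⟨j, c, hsmall, hall⟩ := core η hηpos (min_le_left _ _)
      (le_trans (min_le_right _ _) (min_le_left _ _))
      (le_trans (min_le_right _ _) (le_trans (min_le_right _ _) (min_le_left _ _)))
    have hημ : η ≤ μ/4 :=
      le_trans (min_le_right _ _) (le_trans (min_le_right _ _) (min_le_right _ _))
    have h := hall 0
    rw [zp_zero_apply] at h
    rw [Prod.dist_eq] at h
    obtain ⟨hA, hB⟩ := max_lt_iff.mp h
    have hwj1 : (w j).1 = x j := rfl
    have hwj2 : (w j).2 = y j := rfl
    rw [hwj1] at hA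
    rw [hwj2] at hB
    have hμb := hμle (0 + c)
    have htri : dist (zp F (0 + c) w0).1 (zp F (0 + c) w0).2 ≤
        dist (zp F (0 + c) w0).1 (x j) + dist (x j) (y j) +
        dist (y j) (zp F (0 + c) w0).2 := dist_triangle4 _ _ _ _
    rw [dist_comm] at hA
    rw [dist_comm (y j)] at hB
    -- hA : dist (zp F (0+c) w0).1 (x j) < η ; hB : dist (zp F (0+c) w0).2 (y j) < η
    have hB' : dist (y j) (zp F (0 + c) w0).2 < η := by rwa [dist_comm]
    linarith

end Equicont

/-- Let `X` be a compact metric countable space and `f : X → X` a homeomorphism. TFAE: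
(i) `(X,f)` is equicontinuous; (ii) `(X,f)` is distal;
(iii) `E(X,f,ℤ)` equals the closure of `{fⁿ : n ∈ ℕ}` in `X^X` with the product topology. -/
theorem equicontinuous_tfae_distal_tfae_ellis
    {X : Type*} [MetricSpace X] [CompactSpace X] [Countable X] [Nonempty X]
    (f : X ≃ₜ X) :
    List.TFAE
      [∀ ε > (0:ℝ), ∃ δ > (0:ℝ), ∀ x y : X, dist x y < δ →
         ∀ n : ℤ, dist ((f.toEquiv ^ n) x) ((f.toEquiv ^ n) y) < ε,
       ∀ x y : X, x ≠ y →
         ∃ ε > (0:ℝ), ∀ n : ℤ, ε ≤ dist ((f.toEquiv ^ n) x) ((f.toEquiv ^ n) y),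
       closure {g : X → X | ∃ n : ℤ, g = ⇑(f.toEquiv ^ n)} =
         closure {g : X → X | ∃ n : ℕ, g = (⇑f)^[n]}] := by
  tfae_have 1 → 2
  · intro h x y hxy
    obtain ⟨δ, hδ, hδ2⟩ := h (dist x y) (dist_pos.mpr hxy)
    refine ⟨δ, hδ, fun n => ?_⟩
    by_contra hlt
    push_neg at hlt
    have h2 : dist (zp f n x) (zp f n y) < δ := hlt
    have := hδ2 (zp f n x) (zp f n y) h2 (-n)
    have e1 : zp f (-n) (zp f n x) = x := by
      rw [← zp_apply_add, neg_add_cancel, zp_zero_apply]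
    have e2 : zp f (-n) (zp f n y) = y := by
      rw [← zp_apply_add, neg_add_cancel, zp_zero_apply]
    have h3 : dist (zp f (-n) (zp f n x)) (zp f (-n) (zp f n y)) < dist x y := this
    rw [e1, e2] at h3
    exact lt_irrefl _ h3
  tfae_have 2 → 1
  · intro h
    have hd : ∀ x y : X, x ≠ y → ∃ ε > (0:ℝ), ∀ n : ℤ, ε ≤ dist (zp f n x) (zp f n y) := h
    have hdF := distal_prod f hd
    have hid := id_mem_closure_ps (f.prodCongr f) hdF 1 le_rfl
    have hrec := rec_of_id_mem _ hid
    have hpp := fun p => periodic_of_rec (f.prodCongr f) hrec p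
    exact equicont_of_pp f hpp
  tfae_have 2 → 3
  · intro h
    have hd : ∀ x y : X, x ≠ y → ∃ ε > (0:ℝ), ∀ n : ℤ, ε ≤ dist (zp f n x) (zp f n y) := h
    apply Set.Subset.antisymm
    · apply closure_minimal _ isClosed_closure
      rintro _ ⟨nn, rfl⟩
      set N : ℤ := max 1 (1 - nn) with hN
      have hid := id_mem_closure_ps f hd N (le_max_left _ _)
      have hΦ : Continuous (fun h : X → X => zp f nn ∘ h) :=
        continuous_pi fun x => (zp_continuous f nn).comp (continuous_apply x)
      have hmaps : Set.MapsTo (fun h : X → X => zp f nn ∘ h) (PS f {k : ℤ | N ≤ k})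
          {g : X → X | ∃ n : ℕ, g = (⇑f)^[n]} := by
        rintro _ ⟨k, hk, rfl⟩
        refine ⟨(nn + k).toNat, ?_⟩
        have hk1 : N ≤ k := hk
        have hnn : 0 ≤ nn + k := by
          have : 1 - nn ≤ N := le_max_right _ _
          omega
        have e : (fun h : X → X => zp f nn ∘ h) (zp f k) = zp f (nn + k) :=
          (zp_add f nn k).symm
        rw [e, ← zp_natCast, Int.toNat_of_nonneg hnn]
      have hmem := map_mem_closure hΦ hid hmaps
      have e2 : zp f nn ∘ id = zp f nn := by
        funext t; rfl
      rw [e2] at hmem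
      exact hmem
    · apply closure_mono
      rintro _ ⟨k, rfl⟩
      exact ⟨(k:ℤ), by rw [← zp_natCast]; rfl⟩
  tfae_have 3 → 2
  · intro h
    have hmem : zp f (-1) ∈ closure {g : X → X | ∃ n : ℕ, g = (⇑f)^[n]} := by
      rw [← h]
      exact subset_closure ⟨-1, rfl⟩
    have hrec : ∀ y : X, ∀ ρ > (0:ℝ), ∃ k : ℤ, 1 ≤ k ∧ dist (zp f k y) y < ρ := by
      intro y ρ hρ
      have hV : IsOpen {h : X → X | dist (h (f y)) y < ρ} :=
        isOpen_lt (Continuous.dist (continuous_apply (f y)) continuous_const) continuous_const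
      have hmV : zp f (-1) ∈ {h : X → X | dist (h (f y)) y < ρ} := by
        have e : zp f (-1) (f y) = y := by
          rw [zp_neg_one]
          exact f.symm_apply_apply y
        simp only [Set.mem_setOf_eq, e, dist_self]
        exact hρ
      obtain ⟨h, hhV, k, rfl⟩ := (_root_.mem_closure_iff.mp hmem) _ hV hmV
      refine ⟨(k:ℤ) + 1, by omega, ?_⟩
      have e : (⇑f)^[k] (f y) = zp f ((k:ℤ) + 1) y := by
        rw [zp_apply_add, zp_one, zp_natCast]
      rw [← e]
      exact hhV
    have hpp := fun x => periodic_of_rec f hrec x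
    exact distal_of_pp f hpp
  tfae_finish
end

section
/- Let X be a compact metric space and f : X → X a homeomorphism such that (X,f) is WAP. Then E(X,f,ℤ) is abelian; that is, g ∘ h = h ∘ g for all g, h ∈ E(X,f,ℤ). -/
open Filter Topology

/-- Let `X` be a compact metric space and `f : X → X` a homeomorphism such that `(X,f)`
is WAP (every function in `E(X,f,ℤ)` is continuous). Then `E(X,f,ℤ)` is abelian:
`g ∘ h = h ∘ g` for all `g, h ∈ E(X,f,ℤ)`. -/
theorem wap_ellis_abelian
    {X : Type*} [MetricSpace X] [CompactSpace X] [Nonempty X]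
    (f : X ≃ₜ X)
    (hwap : ∀ g ∈ closure {g : X → X | ∃ n : ℤ, g = ⇑(f.toEquiv ^ n)}, Continuous g) :
    ∀ g ∈ closure {g : X → X | ∃ n : ℤ, g = ⇑(f.toEquiv ^ n)},
      ∀ h ∈ closure {g : X → X | ∃ n : ℤ, g = ⇑(f.toEquiv ^ n)}, g ∘ h = h ∘ g := by
  set S : Set (X → X) := {g : X → X | ∃ n : ℤ, g = ⇑(f.toEquiv ^ n)} with hS
  -- continuity of right composition (always) and left composition (with cont. map)
  have hright : ∀ k : X → X, Continuous (fun g : X → X => g ∘ k) := fun k =>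
    continuous_pi fun x => continuous_apply (k x)
  have hleft : ∀ k : X → X, Continuous k → Continuous (fun g : X → X => k ∘ g) :=
    fun k hk => continuous_pi fun x => hk.comp (continuous_apply x)
  have hmem : ∀ n : ℤ, ⇑(f.toEquiv ^ n) ∈ closure S := fun n =>
    subset_closure ⟨n, rfl⟩
  have hcontpow : ∀ n : ℤ, Continuous ⇑(f.toEquiv ^ n) := fun n => hwap _ (hmem n)
  -- Step 1: each f^n commutes with every g in the closure
  have step1 : ∀ n : ℤ, ∀ g ∈ closure S, g ∘ ⇑(f.toEquiv ^ n) = ⇑(f.toEquiv ^ n) ∘ g := by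
    intro n g hg
    have heq : Set.EqOn (fun g : X → X => g ∘ ⇑(f.toEquiv ^ n))
        (fun g : X → X => ⇑(f.toEquiv ^ n) ∘ g) S := by
      rintro _ ⟨m, rfl⟩
      simp only
      rw [← Equiv.Perm.coe_mul, ← Equiv.Perm.coe_mul, ← zpow_add, ← zpow_add, add_comm]
    exact heq.closure (hright _) (hleft _ (hcontpow n)) hg
  -- Step 2
  intro g hg h hh
  have heq : Set.EqOn (fun h : X → X => g ∘ h) (fun h : X → X => h ∘ g) S := by
    rintro _ ⟨m, rfl⟩
    simpa using step1 m g hg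
  exact heq.closure (hleft _ (hwap g hg)) (hright _) hh
end
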